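/- arXiv:math/9509204 — 11 statements merged into one kernel-verified Lean document; each statement's English description precedes it below -/
import Mathlib

section
/- Let G be a group and σ : Σ* → G a surjective monoid homomorphism from the free monoid over a finite alphabet Σ. The word problem W(G) = σ⁻¹(1) is a regular language if and only if G is finite. -/
/-- Theorem 4.1: the word problem `W(G) = σ⁻¹(1)` of a finitely generated group `G`,
with respect to a choice of generators `σ : Σ* → G`, is a rational (regular) language
if and only if `G` is finite. -/
theorem wordProblem_regular_iff_finite {α : Type} [Fintype α] {G : Type} [Group G]
    (σ : FreeMonoid α →* G) (hσ : Function.Surjective σ) :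
    Language.IsRegular {w : List α | σ (FreeMonoid.ofList w) = 1} ↔ Finite G := by
  constructor
  · rintro ⟨Q, _, M, hM⟩
    -- map g ↦ state reached by a word representing g; this is injective.
    choose rep hrep using hσ
    have key : ∀ w u : List α, (M.eval (w ++ u) ∈ M.accept) ↔
        σ (FreeMonoid.ofList w) * σ (FreeMonoid.ofList u) = 1 := by
      intro w u
      have := congrArg (fun L : Language α => (w ++ u) ∈ L) hM
      simp only [eq_iff_iff, DFA.mem_accepts] at this
      rw [this]
      show σ (FreeMonoid.ofList (w ++ u)) = 1 ↔ _
      rw [show FreeMonoid.ofList (w ++ u)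
            = FreeMonoid.ofList w * FreeMonoid.ofList u from rfl, map_mul]
    have inj : Function.Injective (fun g : G => M.eval (rep g).toList) := by
      intro g h hgh
      simp only at hgh
      have h1 := key (rep g).toList (rep g⁻¹).toList
      have h2 := key (rep h).toList (rep g⁻¹).toList
      simp only [FreeMonoid.ofList_toList, hrep] at h1 h2
      rw [DFA.eval, DFA.evalFrom_of_append] at h1 h2
      rw [DFA.eval] at hgh
      rw [hgh] at h1
      have : h * g⁻¹ = 1 := h2.mp (h1.mpr (mul_inv_cancel g))
      have := mul_inv_eq_one.mp this
      exact this.symm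
    exact Finite.of_injective _ inj
  · intro hG
    have : Fintype G := Fintype.ofFinite G
    refine ⟨G, this, ⟨fun g a => g * σ (FreeMonoid.of a), 1, {1}⟩, ?_⟩
    have ev : ∀ (w : List α) (g : G),
        (DFA.mk (fun g a => g * σ (FreeMonoid.of a)) (1 : G) {1}).evalFrom g w
          = g * σ (FreeMonoid.ofList w) := by
      intro w
      induction w with
      | nil => intro g; simp [DFA.evalFrom]
      | cons a w ih =>
        intro g
        have : FreeMonoid.ofList (a :: w) = FreeMonoid.of a * FreeMonoid.ofList w := rfl
        rw [this, map_mul]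
        have : (DFA.mk (fun g a => g * σ (FreeMonoid.of a)) (1 : G) {1}).evalFrom g (a :: w)
            = (DFA.mk (fun g a => g * σ (FreeMonoid.of a)) (1 : G) {1}).evalFrom
                (g * σ (FreeMonoid.of a)) w := rfl
        rw [this, ih, mul_assoc]
    ext w
    rw [DFA.mem_accepts, DFA.eval, ev]
    show (1 : G) * σ (FreeMonoid.ofList w) ∈ ({1} : Set G) ↔ _
    rw [one_mul]
    exact Iff.rfl
end

section
/- Let G be a group, Σ a finite alphabet, φ : Σ* → G a monoid homomorphism, and L ⊆ Σ* a regular language. Then the subgroup of G generated by the image φ(L) is finitely generated. -/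
open FreeMonoid

/-- Theorem 4.2: the subgroup generated by a rational subset of a group is finitely
generated.  Here a rational subset of `G` is the image `φ(L)` of a regular language `L`
under a monoid homomorphism `φ : Σ* → G`. -/
theorem subgroup_closure_rational_fg {α : Type} [Fintype α] {G : Type} [Group G]
    (φ : FreeMonoid α →* G) (L : Language α) (hL : L.IsRegular) :
    (Subgroup.closure ((fun w : List α => φ (FreeMonoid.ofList w)) '' L)).FG := by
  classical
  obtain ⟨σ, _, M, rfl⟩ := hL
  -- accessible witness words
  set ψ : List α → G := fun w => φ (FreeMonoid.ofList w) with hψ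
  have ψmul : ∀ u v : List α, ψ (u ++ v) = ψ u * ψ v := by
    intro u v
    simp [hψ, FreeMonoid.ofList_append, map_mul]
  let W : σ → List α := fun q =>
    if q = M.start then [] else if h : ∃ w, M.eval w = q then h.choose else []
  have hW : ∀ q, (∃ w, M.eval w = q) → M.eval (W q) = q := by
    intro q hq
    by_cases h : q = M.start
    · simp [W, h, DFA.eval]
    · simp only [W, h, if_false, dif_pos hq]
      exact hq.choose_spec
  have hWstart : W M.start = [] := by simp [W]
  -- coaccessible witness words
  let U : σ → List α := fun q =>
    if h : ∃ u, M.evalFrom q u ∈ M.accept then h.choose else []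
  have hU : ∀ q, (∃ u, M.evalFrom q u ∈ M.accept) → M.evalFrom q (U q) ∈ M.accept := by
    intro q hq
    simp only [U, dif_pos hq]
    exact hq.choose_spec
  -- generators
  let g : σ × α → G := fun pa =>
    if (∃ w, M.eval w = pa.1) ∧ (∃ u, M.evalFrom (M.step pa.1 pa.2) u ∈ M.accept) then
      ψ (W pa.1) * φ (FreeMonoid.of pa.2) * (ψ (W (M.step pa.1 pa.2)))⁻¹
    else 1
  let h : σ → G := fun q =>
    if (∃ w, M.eval w = q) ∧ q ∈ M.accept then ψ (W q) else 1
  refine ⟨(Finset.univ.image g) ∪ (Finset.univ.image h), le_antisymm ?_ ?_⟩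
  · rw [Subgroup.closure_le]
    intro x hx
    simp only [Finset.coe_union, Set.mem_union, Finset.coe_image, Set.mem_image,
      Finset.mem_coe, Finset.mem_univ, Finset.coe_univ, Set.image_univ,
      Set.mem_range] at hx
    have hmem : ∀ w ∈ M.accepts, ψ w ∈ Subgroup.closure (ψ '' M.accepts) := fun w hw =>
      Subgroup.subset_closure ⟨w, hw, rfl⟩
    rcases hx with ⟨pa, rfl⟩ | ⟨q, rfl⟩
    · by_cases hc : (∃ w, M.eval w = pa.1) ∧ (∃ u, M.evalFrom (M.step pa.1 pa.2) u ∈ M.accept)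
      · obtain ⟨p, a⟩ := pa
        obtain ⟨hacc, hco⟩ := hc
        have h1 : (W p ++ a :: U (M.step p a)) ∈ M.accepts := by
          rw [DFA.mem_accepts, DFA.eval, DFA.evalFrom_of_append]
          have : M.evalFrom M.start (W p) = p := hW p hacc
          rw [this]
          have : M.evalFrom p (a :: U (M.step p a)) =
              M.evalFrom (M.step p a) (U (M.step p a)) := rfl
          rw [this]
          exact hU _ hco
        have h2 : (W (M.step p a) ++ U (M.step p a)) ∈ M.accepts := by
          rw [DFA.mem_accepts, DFA.eval, DFA.evalFrom_of_append]
          have hacc2 : ∃ w, M.eval w = M.step p a := by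
            obtain ⟨w, hw⟩ := hacc
            exact ⟨w ++ [a], by rw [DFA.eval_append_singleton, hw]⟩
          rw [show M.evalFrom M.start (W (M.step p a)) = M.step p a from hW _ hacc2]
          exact hU _ hco
        have : g (p, a) = ψ (W p ++ a :: U (M.step p a)) *
            (ψ (W (M.step p a) ++ U (M.step p a)))⁻¹ := by
          simp only [g, if_pos (And.intro hacc hco)]
          rw [show φ (FreeMonoid.of a) = ψ [a] from rfl,
            show (a :: U (M.step p a)) = [a] ++ U (M.step p a) from rfl]
          simp only [ψmul]
          group
        rw [this]
        exact mul_mem (hmem _ h1) (inv_mem (hmem _ h2))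
      · simp only [g, if_neg hc]
        exact one_mem _
    · by_cases hc : (∃ w, M.eval w = q) ∧ q ∈ M.accept
      · have hWq : W q ∈ M.accepts := by
          rw [DFA.mem_accepts]
          rw [show M.eval (W q) = q from hW q hc.1]
          exact hc.2
        simp only [h, if_pos hc]
        exact hmem _ hWq
      · simp only [h, if_neg hc]
        exact one_mem _
  · rw [Subgroup.closure_le]
    rintro x ⟨w, hw, rfl⟩
    set S : Subgroup G := Subgroup.closure ↑((Finset.univ.image g) ∪ (Finset.univ.image h))
    have hgen : ∀ pa : σ × α, g pa ∈ S := fun pa =>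
      Subgroup.subset_closure (by simp [Finset.mem_union, Finset.mem_image])
    have hgen2 : ∀ q : σ, h q ∈ S := fun q =>
      Subgroup.subset_closure (by simp [Finset.mem_union, Finset.mem_image])
    -- main claim by reverse induction
    have key : ∀ w : List α, (∃ u, M.evalFrom (M.eval w) u ∈ M.accept) →
        ψ w * (ψ (W (M.eval w)))⁻¹ ∈ S := by
      intro w
      induction w using List.reverseRecOn with
      | nil =>
        intro _
        have : ψ [] * (ψ (W (M.eval [])))⁻¹ = 1 := by
          simp [DFA.eval, hWstart, hψ]
        rw [this]
        exact one_mem _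
      | append_singleton v a ih =>
        intro hco
        have heval : M.eval (v ++ [a]) = M.step (M.eval v) a := DFA.eval_append_singleton _ _ _
        have hcov : ∃ u, M.evalFrom (M.eval v) u ∈ M.accept := by
          obtain ⟨u, hu⟩ := hco
          refine ⟨a :: u, ?_⟩
          rw [show M.evalFrom (M.eval v) (a :: u) = M.evalFrom (M.step (M.eval v) a) u from rfl,
            ← heval]
          exact hu
        have haccv : ∃ w, M.eval w = M.eval v := ⟨v, rfl⟩
        have hco' : ∃ u, M.evalFrom (M.step (M.eval v) a) u ∈ M.accept := by
          rw [← heval]; exact hco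
        have hg : g (M.eval v, a) =
            ψ (W (M.eval v)) * φ (FreeMonoid.of a) * (ψ (W (M.eval (v ++ [a]))))⁻¹ := by
          simp only [g, if_pos (And.intro haccv hco'), heval]
        have : ψ (v ++ [a]) * (ψ (W (M.eval (v ++ [a]))))⁻¹ =
            (ψ v * (ψ (W (M.eval v)))⁻¹) * g (M.eval v, a) := by
          rw [hg, ψmul, show φ (FreeMonoid.of a) = ψ [a] from rfl]
          group
        rw [this]
        exact mul_mem (ih hcov) (hgen _)
    have hwacc : M.eval w ∈ M.accept := (DFA.mem_accepts M).mp hw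
    have hco : ∃ u, M.evalFrom (M.eval w) u ∈ M.accept := ⟨[], hwacc⟩
    have h1 := key w hco
    have h2 : h (M.eval w) = ψ (W (M.eval w)) :=
      if_pos (And.intro ⟨w, rfl⟩ hwacc)
    have : ψ w = (ψ w * (ψ (W (M.eval w)))⁻¹) * h (M.eval w) := by
      rw [h2]; group
    rw [this]
    exact mul_mem h1 (hgen2 _)
end

section
/- The intersection of two finitely generated subgroups of a free group is finitely generated. That is, if H and K are subgroups of the free group FreeGroup α and both H and K are finitely generated, then H ∩ K is finitely generated. -/
/-!
A subgroup generated by elements of length at most `N` is `N`-quasiconvex: every suffix `q` of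
the reduced word of one of its elements can be completed to an element `a * q` of the subgroup
with `|a| ≤ N`, because left multiplication by a generator only changes a prefix of length at
most `N`. All these `a` use only the finitely many letters of the generators, so they range over
a finite set of size `P` (for `H` and `K` together). If `g ∈ H ⊓ K` is longer than `2P`, two of
its suffixes `q ⊂ q'` of length at most `P` get the same completions in `H` and in `K`, so
`q⁻¹ q' ∈ H ⊓ K`, and replacing `q'` by `q` in `g` gives a shorter element of `H ⊓ K`. By
descent, `H ⊓ K` is generated by its finitely many elements of length at most `2P`.
-/

open List Subgroup

theorem Subgroup.fg_of_forall_exists_lt_inv_mul_le {G : Type*} [Group G] (H : Subgroup G)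
    (f : G → ℕ) (R : ℕ) (hfin : {x | x ∈ H ∧ f x ≤ R}.Finite)
    (h : ∀ g ∈ H, R < f g → ∃ g' ∈ H, f g' < f g ∧ f (g'⁻¹ * g) ≤ R) : H.FG := by
  refine (fg_iff H).2 ⟨_, le_antisymm ((closure_le _).2 fun x hx => hx.1) ?_, hfin⟩
  intro g hg
  induction hn : f g using Nat.strong_induction_on generalizing g with
  | _ n ih =>
    by_cases hR : f g ≤ R
    · exact subset_closure ⟨hg, hR⟩
    obtain ⟨g', hg', hlt, hδ⟩ := h g hg (not_le.1 hR)
    simpa using mul_mem (ih _ (hn ▸ hlt) hg' rfl) (subset_closure ⟨mul_mem (inv_mem hg') hg, hδ⟩)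

namespace FreeGroup

variable {α : Type*} [DecidableEq α]

theorem toWord_mk_singleton_mul (ℓ : α × Bool) (x : FreeGroup α) :
    (mk [ℓ] * x).toWord = ℓ :: x.toWord ∨ (mk [ℓ] * x).toWord = x.toWord.tail := by
  have hmk : mk [ℓ] * x = mk (ℓ :: x.toWord) := by
    conv_lhs => rw [← mk_toWord (x := x)]
    rfl
  rw [hmk, toWord_mk, reduce.cons, reduce_toWord]
  rcases x.toWord with _ | ⟨hd, tl⟩
  · simp
  · by_cases hc : ℓ.1 = hd.1 ∧ ℓ.2 = !hd.2 <;> simp [hc]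

theorem exists_toWord_mul_eq_append (x g : FreeGroup α) :
    ∃ u v, (x * g).toWord = u ++ v ∧ v <:+ g.toWord ∧ u.length ≤ norm x := by
  suffices h : ∀ w, ∃ u v, (mk w * g).toWord = u ++ v ∧ v <:+ g.toWord ∧ u.length ≤ w.length by
    have := h x.toWord
    rwa [mk_toWord] at this
  intro w
  induction w with
  | nil => exact ⟨[], g.toWord, by simp [← one_eq_mk], suffix_rfl, le_rfl⟩
  | cons ℓ w ih =>
    obtain ⟨u, v, huv, hv, hu⟩ := ih
    have hmul : mk (ℓ :: w) * g = mk [ℓ] * (mk w * g) := by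
      rw [← mul_assoc, mul_mk, singleton_append]
    rw [hmul]
    rcases toWord_mk_singleton_mul ℓ (mk w * g) with h | h
    · exact ⟨ℓ :: u, v, by rw [h, huv, cons_append], hv, by simpa using hu⟩
    · rw [huv] at h
      rcases u with _ | ⟨a, u⟩
      · exact ⟨[], v.tail, h, (tail_suffix v).trans hv, by simp⟩
      · exact ⟨u, v, h, hv, by simp at hu ⊢; omega⟩

theorem suffix_toWord_mul_or_exists_mul_mk_eq (x y : FreeGroup α) {q : List (α × Bool)}
    (hq : q <:+ (x * y).toWord) :
    q <:+ y.toWord ∨ ∃ a, norm a ≤ norm x ∧ a * mk q = x * y := by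
  obtain ⟨u, v, huv, hv, hux⟩ := exists_toWord_mul_eq_append x y
  obtain ⟨t, ht⟩ := hq
  rw [huv] at ht
  rcases append_eq_append_iff.1 ht with ⟨u₂, hu, rfl⟩ | ⟨v₁, rfl, hv₁⟩
  · refine .inr ⟨mk t, norm_mk_le.trans ?_, ?_⟩
    · rw [hu, length_append] at hux
      omega
    · rw [mul_mk, ← append_assoc, ← hu, ← huv, mk_toWord]
  · exact .inl ((suffix_append v₁ q).trans (hv₁ ▸ hv))

/-- Quasiconvexity for the right-invariant word metric: every suffix of the reduced word of an
element of `H` lies within distance `N` of `H`. -/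
def IsQuasiconvex (H : Subgroup (FreeGroup α)) (N : ℕ) : Prop :=
  ∀ g ∈ H, ∀ q, q <:+ g.toWord → ∃ a, norm a ≤ N ∧ a * mk q ∈ H

theorem isQuasiconvex_closure {S : Set (FreeGroup α)} {N : ℕ} (hS : ∀ s ∈ S, norm s ≤ N) :
    IsQuasiconvex (closure S) N := by
  have step : ∀ x ∈ closure S, norm x ≤ N → ∀ y ∈ closure S,
      (∀ q, q <:+ y.toWord → ∃ a, norm a ≤ N ∧ a * mk q ∈ closure S) →
      ∀ q, q <:+ (x * y).toWord → ∃ a, norm a ≤ N ∧ a * mk q ∈ closure S := by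
    intro x hx hxN y hy ih q hq
    rcases suffix_toWord_mul_or_exists_mul_mk_eq x y hq with hq | ⟨a, ha, hxy⟩
    · exact ih q hq
    · exact ⟨a, ha.trans hxN, hxy ▸ mul_mem hx hy⟩
  intro g hg
  induction hg using closure_induction_left with
  | one =>
    intro q hq
    rw [toWord_one, suffix_nil] at hq
    exact ⟨1, by simp [norm_one], by simp [hq, ← one_eq_mk]⟩
  | mul_left x hx y hy ih => exact step x (subset_closure hx) (hS x hx) y hy ih
  | inv_mul_cancel x hx y hy ih =>
    exact step x⁻¹ (inv_mem (subset_closure hx)) (norm_inv_eq.trans_le (hS x hx)) y hy ih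

theorem _root_.Subgroup.FG.exists_isQuasiconvex {H : Subgroup (FreeGroup α)} (hH : H.FG) :
    ∃ N, IsQuasiconvex H N := by
  obtain ⟨S, rfl⟩ := hH
  exact ⟨S.sup norm, isQuasiconvex_closure fun s hs => Finset.le_sup hs⟩

def lettersIn (L : Finset α) : Subgroup (FreeGroup α) where
  carrier := {x | ∀ p ∈ x.toWord, p.1 ∈ L}
  one_mem' := by simp
  mul_mem' {x y} hx hy p hp := by
    rcases mem_append.1 ((toWord_mul_sublist x y).subset hp) with h | h
    exacts [hx p h, hy p h]
  inv_mem' {x} hx p hp := by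
    simp only [toWord_inv, invRev, mem_reverse, mem_map] at hp
    obtain ⟨p, hp, rfl⟩ := hp
    exact hx p hp

theorem mk_mem_lettersIn {L : Finset α} {w : List (α × Bool)} (hw : ∀ p ∈ w, p.1 ∈ L) :
    mk w ∈ lettersIn L := by
  intro p hp
  rw [toWord_mk] at hp
  exact hw p ((Red.sublist reduce.red).subset hp)

theorem _root_.Subgroup.FG.exists_le_lettersIn {H : Subgroup (FreeGroup α)} (hH : H.FG) :
    ∃ L : Finset α, H ≤ lettersIn L := by
  obtain ⟨S, rfl⟩ := hH
  refine ⟨S.biUnion fun s : FreeGroup α => (s.toWord.map Prod.fst).toFinset,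
    (closure_le _).2 fun s hs p hp => ?_⟩
  simp only [Finset.mem_biUnion, mem_toFinset, mem_map]
  exact ⟨s, hs, p, hp, rfl⟩

theorem finite_setOf_mem_lettersIn_norm_le (L : Finset α) (N : ℕ) :
    {x : FreeGroup α | x ∈ lettersIn L ∧ norm x ≤ N}.Finite := by
  let S := {p : α × Bool | p.1 ∈ L}
  have : Finite S :=
    ((L.finite_toSet.prod Set.finite_univ).subset fun p hp => ⟨hp, trivial⟩).to_subtype
  refine ((finite_length_le S N).image fun l => mk (l.map Subtype.val)).subset ?_
  rintro x ⟨hxL, hxN⟩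
  rw [← mk_toWord (x := x)]
  have hw : ∀ p ∈ x.toWord, p ∈ S := hxL
  have hlen : x.toWord.length ≤ N := hxN
  lift x.toWord to List S using hw with l
  exact ⟨l, by simpa using hlen, rfl⟩

theorem IsQuasiconvex.exists_mem_lettersIn {H : Subgroup (FreeGroup α)} {N : ℕ} {L : Finset α}
    (hH : IsQuasiconvex H N) (hHL : H ≤ lettersIn L) {g : FreeGroup α} (hg : g ∈ H)
    {q : List (α × Bool)} (hq : q <:+ g.toWord) :
    ∃ a, (a ∈ lettersIn L ∧ norm a ≤ N) ∧ a * mk q ∈ H := by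
  obtain ⟨a, haN, haH⟩ := hH g hg q hq
  have hqL : mk q ∈ lettersIn L := mk_mem_lettersIn fun p hp => hHL hg p (hq.subset hp)
  refine ⟨a, ⟨?_, haN⟩, haH⟩
  simpa only [mul_inv_cancel_right] using mul_mem (hHL haH) (inv_mem hqL)

theorem norm_mul_inv_mk_drop_mul_mk_drop_lt (g : FreeGroup α) {k m : ℕ} (hkm : k < m)
    (hm : m ≤ norm g) :
    norm (g * (mk (g.toWord.drop k))⁻¹ * mk (g.toWord.drop m)) < norm g := by
  have hg : g * (mk (g.toWord.drop k))⁻¹ = mk (g.toWord.take k) := by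
    rw [mul_inv_eq_iff_eq_mul, mul_mk, take_append_drop, mk_toWord]
  rw [hg, mul_mk]
  refine norm_mk_le.trans_lt ?_
  simp only [length_append, length_take, length_drop]
  unfold norm at hm ⊢
  omega

theorem IsQuasiconvex.inf_exists_shortening {H K : Subgroup (FreeGroup α)} {N M : ℕ}
    {L : Finset α} (hH : IsQuasiconvex H N) (hK : IsQuasiconvex K M)
    (hHL : H ≤ lettersIn L) (hKL : K ≤ lettersIn L) :
    ∃ R, ∀ g ∈ H ⊓ K, R < norm g → ∃ g' ∈ H ⊓ K, norm g' < norm g ∧ norm (g'⁻¹ * g) ≤ R := by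
  have inv_mul_mem {G : Subgroup (FreeGroup α)} {a x y : FreeGroup α} (hx : a * x ∈ G)
      (hy : a * y ∈ G) : x⁻¹ * y ∈ G := by
    simpa [mul_assoc] using mul_mem (inv_mem hx) hy
  set B := (finite_setOf_mem_lettersIn_norm_le L N).toFinset ×ˢ
    (finite_setOf_mem_lettersIn_norm_le L M).toFinset
  refine ⟨2 * B.card, fun g hg hlong => ?_⟩
  set w := g.toWord
  choose A hA hAH using fun k => hH.exists_mem_lettersIn hHL hg.1 (w.drop_suffix k)
  choose C hC hCK using fun k => hK.exists_mem_lettersIn hKL hg.2 (w.drop_suffix k)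
  obtain ⟨k, hk, m, hm, hne, hAC⟩ := Finset.exists_ne_map_eq_of_card_lt_of_maps_to
    (s := Finset.Icc (norm g - B.card) (norm g)) (t := B) (f := fun k => (A k, C k))
    (by simp; omega) (fun k _ => by simp [B, hA k, hC k])
  wlog hkm : k < m generalizing k m
  · exact this m hm k hk hne.symm hAC.symm (by omega)
  simp only [Prod.mk.injEq] at hAC
  rw [Finset.mem_Icc] at hk hm
  have hδ : (mk (w.drop m))⁻¹ * mk (w.drop k) ∈ H ⊓ K :=
    ⟨inv_mul_mem (hAC.1 ▸ hAH m) (hAH k), inv_mul_mem (hAC.2 ▸ hCK m) (hCK k)⟩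
  refine ⟨g * ((mk (w.drop m))⁻¹ * mk (w.drop k))⁻¹, mul_mem hg (inv_mem hδ), ?_, ?_⟩
  · rw [mul_inv_rev, inv_inv, ← mul_assoc]
    exact norm_mul_inv_mk_drop_mul_mk_drop_lt g hkm hm.2
  · have hdrop (i : ℕ) : norm (mk (w.drop i)) ≤ norm g - i :=
      norm_mk_le.trans_eq (length_drop ..)
    rw [mul_inv_rev, inv_inv, inv_mul_cancel_right]
    calc norm ((mk (w.drop m))⁻¹ * mk (w.drop k))
        ≤ norm (mk (w.drop m)) + norm (mk (w.drop k)) := by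
          rw [← norm_inv_eq (x := mk (w.drop m))]; exact norm_mul_le _ _
      _ ≤ (norm g - m) + (norm g - k) := add_le_add (hdrop m) (hdrop k)
      _ ≤ 2 * B.card := by omega

end FreeGroup

open FreeGroup

/-- Theorem 4.3 (Howson property): the intersection of two finitely generated subgroups
of a free group is finitely generated. -/
theorem freeGroup_inf_fg {α : Type} (H K : Subgroup (FreeGroup α))
    (hH : H.FG) (hK : K.FG) : (H ⊓ K).FG := by
  classical
  obtain ⟨L, hL⟩ := (hH.sup hK).exists_le_lettersIn
  obtain ⟨N, hN⟩ := hH.exists_isQuasiconvex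
  obtain ⟨M, hM⟩ := hK.exists_isQuasiconvex
  obtain ⟨R, hR⟩ := hN.inf_exists_shortening hM (le_sup_left.trans hL) (le_sup_right.trans hL)
  refine (H ⊓ K).fg_of_forall_exists_lt_inv_mul_le norm R
    ((finite_setOf_mem_lettersIn_norm_le L R).subset fun x hx => ⟨?_, hx.2⟩) hR
  exact hL (mem_sup_left (mem_inf.1 hx.1).1)
end

section
/- Let α be a finite type with decidable equality, and represent words over formal generators and inverses as lists over α × Bool (as in Lean's construction of FreeGroup α, where free reduction is given by FreeGroup.reduce). If L is a regular language over the alphabet α × Bool, then the language {FreeGroup.reduce v | v ∈ L} of free reductions of words of L is also regular. -/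
/-!
Let `M` be a finite DFA for `L`. Saturate it into an NFA on the same states: reading a letter `c`
in state `p`, first follow in `M` any word `u` with `mk u = 1`, then read `c`; accept in `p` if
some such null word leads from `p` to acceptance. This NFA accepts exactly the words `w` such that
inserting null words around the letters of `w` yields a word `v ∈ L`. Such a `w` represents the
same group element as `v`, and `reduce v` itself arises in this way from `v`, so the image of
`reduce` on `L` is the intersection of this regular language with the regular language of reduced
words, which is defined by a condition on consecutive letters.
-/

theorem NFA.mem_acceptsFrom_iff_exists {T τ : Type*} {N : NFA T τ} {S : Set τ}
    {w : List T} : w ∈ N.acceptsFrom S ↔ ∃ s ∈ S, w ∈ N.acceptsFrom {s} := by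
  simp only [NFA.mem_acceptsFrom, NFA.mem_evalFrom_iff_exists (S := S)]
  tauto

section Chain

variable {T : Type*} (R : T → T → Prop) [DecidableRel R]

/-- State `none` is a dead state, `some none` the initial state and `some (some a)` remembers the
last letter `a` read. -/
def DFA.chain : DFA T (Option (Option T)) where
  step
    | some none, c => some (some c)
    | some (some a), c => if R a c then some (some c) else none
    | none, _ => none
  start := some none
  accept := {s | s ≠ none}

theorem DFA.chain_evalFrom_none (w : List T) : (DFA.chain R).evalFrom none w = none := by
  induction w with
  | nil => rfl
  | cons c w ih => exact ih

theorem DFA.chain_evalFrom_some_ne_none (s : Option T) (w : List T) :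
    (DFA.chain R).evalFrom (some s) w ≠ none ↔ (s.toList ++ w).IsChain R := by
  induction w generalizing s with
  | nil => cases s <;> simp [DFA.chain]
  | cons c w ih =>
    rw [DFA.evalFrom_cons]
    rcases s with _ | a
    · exact ih (some c)
    · by_cases hac : R a c
      · simpa [DFA.chain, hac] using ih (some c)
      · have hdead : (DFA.chain R).step (some (some a)) c = none := by simp [DFA.chain, hac]
        simp [hdead, hac, DFA.chain_evalFrom_none]

theorem DFA.chain_accepts : (DFA.chain R).accepts = {w | w.IsChain R} := by
  ext w
  exact DFA.chain_evalFrom_some_ne_none R none w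

end Chain

theorem Language.isRegular_setOf_isChain {T : Type*} [Fintype T] (R : T → T → Prop) :
    Language.IsRegular ({w | w.IsChain R} : Language T) := by
  classical
  exact Language.isRegular_iff.mpr ⟨_, inferInstance, DFA.chain R, DFA.chain_accepts R⟩

namespace FreeGroup

variable {α : Type*}

/-- `NullPadding w v` says that `v = u₀ c₁ u₁ ⋯ cₙ uₙ` where `w = c₁ ⋯ cₙ` and every `uᵢ`
represents `1`. -/
inductive NullPadding : List (α × Bool) → List (α × Bool) → Prop
  | nil {u : List (α × Bool)} : mk u = 1 → NullPadding [] u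
  | cons {u w v : List (α × Bool)} (c : α × Bool) :
      mk u = 1 → NullPadding w v → NullPadding (c :: w) (u ++ c :: v)

theorem nullPadding_nil_iff {v : List (α × Bool)} : NullPadding [] v ↔ mk v = 1 :=
  ⟨fun | .nil h => h, .nil⟩

theorem nullPadding_cons_iff {c : α × Bool} {w v : List (α × Bool)} :
    NullPadding (c :: w) v ↔ ∃ u v', mk u = 1 ∧ NullPadding w v' ∧ v = u ++ c :: v' :=
  ⟨fun | .cons _ hu h => ⟨_, _, hu, h, rfl⟩, fun ⟨_, _, hu, h, hv⟩ => hv ▸ .cons c hu h⟩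

theorem NullPadding.mk_eq {w v : List (α × Bool)} (h : NullPadding w v) : mk v = mk w := by
  induction h with
  | nil hu => exact hu
  | @cons u w v c hu _ ih =>
    rw [← mul_mk, hu, one_mul, ← List.singleton_append, ← mul_mk, ih, mul_mk,
      List.singleton_append]

theorem NullPadding.null_append {w v u : List (α × Bool)} (hu : mk u = 1)
    (h : NullPadding w v) : NullPadding w (u ++ v) := by
  cases h with
  | nil hv => exact .nil (by rw [← mul_mk, hu, hv, one_mul])
  | @cons u' w v c hu' h =>
    rw [← List.append_assoc]
    exact .cons c (by rw [← mul_mk, hu, hu', one_mul]) h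

theorem mk_not_cons_append_eq_one {a : α} {b : Bool} {u : List (α × Bool)} (hu : mk u = 1) :
    mk ((a, !b) :: u ++ [(a, b)]) = 1 := by
  rw [List.cons_append, ← List.singleton_append, ← mul_mk, ← mul_mk, hu, one_mul, mul_mk]
  exact Quot.sound Red.Step.cons_not_rev

section Saturation

variable {σ : Type*} (M : DFA (α × Bool) σ)

def _root_.DFA.nullSaturation : NFA (α × Bool) σ where
  step p c := {q | ∃ u, mk u = 1 ∧ q = M.step (M.evalFrom p u) c}
  start := {M.start}
  accept := {p | ∃ u, mk u = 1 ∧ u ∈ M.acceptsFrom p}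

theorem mem_nullSaturation_acceptsFrom {p : σ} {w : List (α × Bool)} :
    w ∈ M.nullSaturation.acceptsFrom {p} ↔ ∃ v ∈ M.acceptsFrom p, NullPadding w v := by
  induction w generalizing p with
  | nil => simp [DFA.nullSaturation, nullPadding_nil_iff, and_comm]
  | cons c w ih =>
    rw [NFA.cons_mem_acceptsFrom, NFA.stepSet_singleton, NFA.mem_acceptsFrom_iff_exists]
    simp only [ih, nullPadding_cons_iff]
    constructor
    · rintro ⟨_, ⟨u, hu, rfl⟩, v, hv, hw⟩
      exact ⟨u ++ c :: v, by simpa [DFA.mem_acceptsFrom, DFA.evalFrom_of_append] using hv,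
        u, v, hu, hw, rfl⟩
    · rintro ⟨_, hv, u, v, hu, hw, rfl⟩
      exact ⟨_, ⟨u, hu, rfl⟩, v, by simpa [DFA.mem_acceptsFrom, DFA.evalFrom_of_append] using hv,
        hw⟩

theorem isRegular_setOf_nullPadding {L : Language (α × Bool)} (hL : L.IsRegular) :
    Language.IsRegular {w | ∃ v ∈ L, NullPadding w v} := by
  classical
  obtain ⟨σ, _, M, rfl⟩ := hL
  exact ⟨Set σ, inferInstance, M.nullSaturation.toDFA, by
    ext w; rw [NFA.toDFA_correct]; exact mem_nullSaturation_acceptsFrom M⟩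

end Saturation

variable [DecidableEq α]

theorem nullPadding_reduce (v : List (α × Bool)) : NullPadding (reduce v) v := by
  induction v with
  | nil => exact .nil rfl
  | cons x v ih =>
    rcases hred : reduce v with _ | ⟨y, w⟩ <;> rw [reduce.cons, hred] <;> rw [hred] at ih
    · exact .cons (u := []) x rfl ih
    · dsimp only
      split_ifs with hxy
      -- `x` cancels against the first letter `y` of `reduce v`, so `x u y` is a null chunk
      · obtain ⟨u, v', hu, hw, rfl⟩ := nullPadding_cons_iff.mp ih
        obtain ⟨a, b⟩ := y
        obtain ⟨rfl, rfl⟩ : x = (a, !b) := Prod.ext hxy.1 hxy.2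
        simpa using hw.null_append (mk_not_cons_append_eq_one hu)
      · exact .cons (u := []) x rfl ih

end FreeGroup

/-- Lemma 4.4: if `L` is a regular language over the alphabet `α × Bool` (words in the
generators and formal inverses), then the language of free reductions of words of `L`
is regular too. -/
theorem reduce_image_regular {α : Type} [Fintype α] [DecidableEq α]
    (L : Language (α × Bool)) (hL : L.IsRegular) :
    Language.IsRegular {w : List (α × Bool) | ∃ v ∈ L, FreeGroup.reduce v = w} := by
  have key : ({w | ∃ v ∈ L, FreeGroup.reduce v = w} : Language (α × Bool)) =
      {w | ∃ v ∈ L, FreeGroup.NullPadding w v} ⊓ {w | FreeGroup.IsReduced w} := by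
    ext w
    constructor
    · rintro ⟨v, hv, rfl⟩
      exact ⟨⟨v, hv, FreeGroup.nullPadding_reduce v⟩, .of_reduce_eq FreeGroup.reduce.idem⟩
    · rintro ⟨⟨v, hv, hw⟩, hred⟩
      exact ⟨v, hv, (FreeGroup.reduce.sound hw.mk_eq).trans hred.reduce_eq⟩
  rw [key]
  exact (FreeGroup.isRegular_setOf_nullPadding hL).inf (Language.isRegular_setOf_isChain _)
end

section
/- Let Γ, Σ, Δ be finite alphabets, let f : Γ* → Σ* and g : Γ* → Δ* be monoid homomorphisms of free monoids, let R ⊆ Γ* be a regular language, and let L ⊆ Σ* be a regular language. Then the language {g(r) | r ∈ R and f(r) ∈ L} ⊆ Δ* is regular. -/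
/-! The language is the image under `g` of `R ∩ f⁻¹(L)`. Regular languages are closed under
intersection, under inverse homomorphisms (run a DFA for `L` on the word `f a` at each letter `a`),
and, over a finite source alphabet, under homomorphic images: an ε-NFA simulates a DFA for the
source language, guessing the next letter `a` by an ε-move and then emitting `g a` letter by letter.
Its states remember the part of `g a` still to be emitted, a suffix of one of the finitely many
words `g a`. -/

namespace DFA

variable {α β σ : Type*}

def comapFlatMap (h : α → List β) (M : DFA β σ) : DFA α σ where
  step q a := M.evalFrom q (h a)
  start := M.start
  accept := M.accept

theorem evalFrom_comapFlatMap (h : α → List β) (M : DFA β σ) (q : σ) (r : List α) :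
    (M.comapFlatMap h).evalFrom q r = M.evalFrom q (r.flatMap h) := by
  induction r generalizing q with
  | nil => rfl
  | cons a r ih => rw [evalFrom_cons, ih, List.flatMap_cons, evalFrom_of_append]; rfl

theorem accepts_comapFlatMap (h : α → List β) (M : DFA β σ) :
    (M.comapFlatMap h).accepts = (·.flatMap h) ⁻¹' M.accepts := by
  ext r
  exact (congrArg (· ∈ M.accept) (evalFrom_comapFlatMap h M M.start r)).to_iff

/-- `[]` is listed separately since it is a suffix of some `h a` only when `α` is nonempty. -/
def outputSuffixes (h : α → List β) : Set (List β) := insert [] {u | ∃ a, u <:+ h a}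

theorem finite_outputSuffixes [Finite α] (h : α → List β) : (outputSuffixes h).Finite := by
  refine .insert _ (.subset (Set.finite_iUnion fun a => (h a).tails.finite_toSet) ?_)
  rintro u ⟨a, hu⟩
  exact Set.mem_iUnion.2 ⟨a, (List.mem_tails _ _).2 hu⟩

theorem nil_mem_outputSuffixes (h : α → List β) : [] ∈ outputSuffixes h :=
  Set.mem_insert _ _

theorem mem_outputSuffixes_of_cons {h : α → List β} {b : β} {u : List β}
    (hu : b :: u ∈ outputSuffixes h) : u ∈ outputSuffixes h := by
  rcases hu with hu | ⟨a, hu⟩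
  · cases hu
  · exact Or.inr ⟨a, (List.suffix_cons b u).trans hu⟩

def flatMapεNFA (h : α → List β) (M : DFA α σ) : εNFA β (σ × outputSuffixes h) where
  step s
    | some b => {t | t.1 = s.1 ∧ s.2.1 = b :: t.2.1}
    | none => {t | s.2.1 = [] ∧ ∃ a, t.1 = M.step s.1 a ∧ t.2.1 = h a}
  start := {s | s.1 = M.start ∧ s.2.1 = []}
  accept := {s | s.1 ∈ M.accept ∧ s.2.1 = []}

variable {h : α → List β} {M : DFA α σ}

theorem exists_flatMap_of_isPath_flatMapεNFA {s t : σ × outputSuffixes h} {x : List (Option β)}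
    (hx : (M.flatMapεNFA h).IsPath s t x) :
    ∃ r, M.evalFrom s.1 r = t.1 ∧ s.2.1 ++ r.flatMap h = x.reduceOption ++ t.2.1 := by
  induction hx with
  | nil s => exact ⟨[], rfl, by simp⟩
  | cons t s u b x hst _ ih =>
    obtain ⟨r, hr, hout⟩ := ih
    cases b with
    | some b =>
      obtain ⟨hq, hs⟩ := hst
      refine ⟨r, hq ▸ hr, ?_⟩
      simp [hs, hout]
    | none =>
      obtain ⟨hs, a, hq, ht⟩ := hst
      refine ⟨a :: r, by rw [evalFrom_cons, ← hq, hr], ?_⟩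
      simp [hs, ← ht, hout]

theorem isPath_flatMapεNFA_map_some (q : σ) (u : outputSuffixes h) :
    (M.flatMapεNFA h).IsPath (q, u) (q, ⟨[], nil_mem_outputSuffixes h⟩) (u.1.map some) := by
  obtain ⟨u, hu⟩ := u
  induction u with
  | nil => exact .nil _
  | cons b u ih =>
    exact .cons (q, ⟨u, mem_outputSuffixes_of_cons hu⟩) _ _ _ _ ⟨rfl, rfl⟩ (ih _)

theorem exists_isPath_flatMapεNFA_evalFrom (q : σ) (r : List α) :
    ∃ x : List (Option β), x.reduceOption = r.flatMap h ∧
      (M.flatMapεNFA h).IsPath (q, ⟨[], nil_mem_outputSuffixes h⟩)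
        (M.evalFrom q r, ⟨[], nil_mem_outputSuffixes h⟩) x := by
  induction r generalizing q with
  | nil => exact ⟨[], rfl, .nil _⟩
  | cons a r ih =>
    obtain ⟨x, hx, hpath⟩ := ih (M.step q a)
    let pending : outputSuffixes h := ⟨h a, Or.inr ⟨a, List.suffix_refl _⟩⟩
    refine ⟨none :: ((h a).map some ++ x), ?_,
      .cons (M.step q a, pending) _ _ _ _ ⟨rfl, a, rfl, rfl⟩
        ((εNFA.isPath_append _).2 ⟨_, isPath_flatMapεNFA_map_some _ pending, hpath⟩)⟩
    rw [List.reduceOption_cons_of_none, List.reduceOption_append, hx]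
    simp [List.reduceOption]

theorem accepts_flatMapεNFA : (M.flatMapεNFA h).accepts = (·.flatMap h) '' M.accepts := by
  ext w
  rw [εNFA.mem_accepts_iff_exists_path]
  constructor
  · rintro ⟨s, t, x, ⟨hs, hs'⟩, ⟨ht, ht'⟩, rfl, hx⟩
    obtain ⟨r, hr, hout⟩ := exists_flatMap_of_isPath_flatMapεNFA hx
    refine ⟨r, ?_, ?_⟩
    · show M.evalFrom M.start r ∈ M.accept
      rwa [← hs, hr]
    · simpa [hs', ht'] using hout
  · rintro ⟨r, hr, rfl⟩
    obtain ⟨x, hx, hpath⟩ := exists_isPath_flatMapεNFA_evalFrom (h := h) (M := M) M.start r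
    exact ⟨_, (M.eval r, _), x, ⟨rfl, rfl⟩, ⟨hr, rfl⟩, hx, hpath⟩

end DFA

theorem εNFA.isRegular_accepts {α σ : Type*} [Finite σ] (M : εNFA α σ) : M.accepts.IsRegular :=
  Language.isRegular_iff.2
    ⟨Set σ, Fintype.ofFinite _, M.toNFA.toDFA, by rw [NFA.toDFA_correct, εNFA.toNFA_correct]⟩

namespace Language.IsRegular

variable {α β : Type*}

theorem preimage_flatMap {L : Language β} (hL : L.IsRegular) (h : α → List β) :
    Language.IsRegular ((·.flatMap h) ⁻¹' L : Language α) := by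
  obtain ⟨σ, _, M, rfl⟩ := hL
  exact ⟨σ, inferInstance, M.comapFlatMap h, M.accepts_comapFlatMap h⟩

theorem image_flatMap [Finite α] {L : Language α} (hL : L.IsRegular) (h : α → List β) :
    Language.IsRegular ((·.flatMap h) '' L : Language β) := by
  obtain ⟨σ, _, M, rfl⟩ := hL
  have : Finite (DFA.outputSuffixes h) := (DFA.finite_outputSuffixes h).to_subtype
  rw [← DFA.accepts_flatMapεNFA]
  exact εNFA.isRegular_accepts _

end Language.IsRegular

theorem FreeMonoid.toList_apply_ofList {α β : Type*} (φ : FreeMonoid α →* FreeMonoid β)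
    (r : List α) : (φ (ofList r)).toList = r.flatMap fun a => (φ (of a)).toList := by
  induction r with
  | nil => simp
  | cons a r ih => rw [ofList_cons, map_mul, toList_mul, ih, List.flatMap_cons]

theorem image_rational_transduction_regular_general {Γ S Δ : Type}
    [Fintype Γ]
    (f : FreeMonoid Γ →* FreeMonoid S) (g : FreeMonoid Γ →* FreeMonoid Δ)
    (R : Language Γ) (hR : R.IsRegular) (L : Language S) (hL : L.IsRegular) :
    Language.IsRegular
      {w : List Δ | ∃ r ∈ R, FreeMonoid.toList (f (FreeMonoid.ofList r)) ∈ L ∧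
        FreeMonoid.toList (g (FreeMonoid.ofList r)) = w} := by
  set F := fun a => (f (.of a)).toList
  set G := fun a => (g (.of a)).toList
  have image_eq : {w : List Δ | ∃ r ∈ R, FreeMonoid.toList (f (FreeMonoid.ofList r)) ∈ L ∧
      FreeMonoid.toList (g (FreeMonoid.ofList r)) = w} =
        (·.flatMap G) '' (R ⊓ (·.flatMap F) ⁻¹' L) := by
    ext w
    simp only [Set.mem_image, FreeMonoid.toList_apply_ofList]
    exact ⟨fun ⟨r, hr, hfr, hgr⟩ => ⟨r, ⟨hr, hfr⟩, hgr⟩, fun ⟨r, ⟨hr, hfr⟩, hgr⟩ => ⟨r, hr, hfr, hgr⟩⟩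
  rw [image_eq]
  exact (hR.inf (hL.preimage_flatMap F)).image_flatMap G

/-- Corollary 5.5 for free monoids: the image of a rational language under a rational
relation (transduction) is rational.  The rational relation `Σ* → Δ*` is presented as
`{(f(r), g(r)) | r ∈ R}` for homomorphisms `f : Γ* → Σ*`, `g : Γ* → Δ*` and a regular
language `R ⊆ Γ*`. -/
theorem image_rational_transduction_regular {Γ S Δ : Type}
    [Fintype Γ] [Fintype S] [Fintype Δ]
    (f : FreeMonoid Γ →* FreeMonoid S) (g : FreeMonoid Γ →* FreeMonoid Δ)
    (R : Language Γ) (hR : R.IsRegular) (L : Language S) (hL : L.IsRegular) :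
    Language.IsRegular
      {w : List Δ | ∃ r ∈ R, FreeMonoid.toList (f (FreeMonoid.ofList r)) ∈ L ∧
        FreeMonoid.toList (g (FreeMonoid.ofList r)) = w} :=
  image_rational_transduction_regular_general f g R hR L hL
end

section
/- Let G be a group and let σ : Σ* → G and τ : Δ* → G be two surjective monoid homomorphisms from free monoids over finite alphabets. If the word problem σ⁻¹(1) ⊆ Σ* is a context-free language, then τ⁻¹(1) ⊆ Δ* is also a context-free language. -/
/-!
Choose words `e d` over `α` with `σ (e d) = τ d`. Then the word problem of `τ` is the preimage of
that of `σ` under the homomorphism `w ↦ w.flatMap e`, and context-free languages are closed under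
inverse homomorphisms by the classical argument: insert arbitrary letters of `Δ` into the words of
the language, intersect with the regular language of encodings `d₁ e(d₁) d₂ e(d₂) ⋯`, and erase
the letters of `α` again.
-/

lemma NFA.mem_evalFrom_singleton_cons {α σ : Type*} {M : NFA α σ} {p q : σ} {a : α}
    {w : List α} : q ∈ M.evalFrom {p} (a :: w) ↔ ∃ m ∈ M.step p a, q ∈ M.evalFrom {m} w := by
  rw [NFA.evalFrom_cons, NFA.stepSet_singleton, NFA.mem_evalFrom_iff_exists]

namespace ContextFreeGrammar

variable {T : Type*}

lemma produces_singleton_nonterminal_iff {g : ContextFreeGrammar T} {A : g.NT}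
    {u : List (Symbol T g.NT)} :
    g.Produces [.nonterminal A] u ↔ ∃ r ∈ g.rules, r.input = A ∧ u = r.output := by
  constructor
  · rintro ⟨r, hr, hru⟩
    obtain ⟨p, q, hA, rfl⟩ := hru.exists_parts
    rw [List.append_assoc, List.singleton_append, eq_comm, List.append_eq_singleton_iff] at hA
    simp only [List.cons_ne_nil, and_false, or_false, List.cons.injEq,
      Symbol.nonterminal.injEq] at hA
    obtain ⟨rfl, rfl, rfl⟩ := hA
    exact ⟨r, hr, rfl, by simp⟩
  · rintro ⟨r, hr, rfl, rfl⟩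
    exact ⟨r, hr, ContextFreeRule.Rewrites.input_output⟩

lemma derives_of_mem_rules {g : ContextFreeGrammar T} {r : ContextFreeRule T g.NT}
    (hr : r ∈ g.rules) : g.Derives [.nonterminal r.input] r.output :=
  Produces.single ⟨r, hr, ContextFreeRule.Rewrites.input_output⟩

lemma Derives.flatMap {U : Type*} {g₁ : ContextFreeGrammar T} {g₂ : ContextFreeGrammar U}
    (m : Symbol T g₁.NT → List (Symbol U g₂.NT))
    (hm : ∀ r ∈ g₁.rules, g₂.Derives (m (.nonterminal r.input)) (r.output.flatMap m))
    {s t : List (Symbol T g₁.NT)} (h : g₁.Derives s t) :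
    g₂.Derives (s.flatMap m) (t.flatMap m) := by
  induction h with
  | refl => exact Derives.refl _
  | tail _ hst ih =>
    obtain ⟨r, hr, hrw⟩ := hst
    obtain ⟨p, q, rfl, rfl⟩ := hrw.exists_parts
    refine ih.trans ?_
    simpa using ((hm r hr).append_right _).append_left _

section Expand

variable {U : Type*}

def expandSymbol {N : Type} (f : T → List U) : Symbol T N → List (Symbol U N)
  | .terminal a => (f a).map .terminal
  | .nonterminal A => [.nonterminal A]

lemma flatMap_expandSymbol_map_terminal {N : Type} (f : T → List U) (w : List T) :
    (w.map (.terminal : T → Symbol T N)).flatMap (expandSymbol f) =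
      (w.flatMap f).map .terminal := by
  simp [List.flatMap_map, List.map_flatMap, expandSymbol]

lemma flatMap_expandSymbol_eq_append_nonterminal {N : Type} {f : T → List U}
    {s : List (Symbol T N)} {u v : List (Symbol U N)} {A : N}
    (h : s.flatMap (expandSymbol f) = u ++ .nonterminal A :: v) :
    ∃ p q, s = p ++ .nonterminal A :: q ∧
      p.flatMap (expandSymbol f) = u ∧ q.flatMap (expandSymbol f) = v := by
  induction s generalizing u with
  | nil => simp at h
  | cons X s ih =>
    rw [List.flatMap_cons] at h
    cases X with
    | terminal a =>
      rcases List.append_eq_append_iff.1 h with ⟨c, rfl, hs⟩ | ⟨_ | ⟨y, c⟩, hfa, hs⟩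
      · obtain ⟨p, q, rfl, rfl, rfl⟩ := ih hs
        exact ⟨.terminal a :: p, q, rfl, rfl, rfl⟩
      · obtain ⟨p, q, rfl, hp, rfl⟩ := ih (u := []) (by simpa using hs.symm)
        exact ⟨.terminal a :: p, q, rfl, by simp [hp, hfa], rfl⟩
      · obtain rfl : y = .nonterminal A := (List.cons.inj hs).1.symm
        have hA := congrArg (Symbol.nonterminal A ∈ ·) hfa
        simp [expandSymbol] at hA
    | nonterminal B =>
      rcases List.cons_eq_append_iff.1 h with ⟨rfl, hs⟩ | ⟨u, rfl, hs⟩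
      · simp only [List.cons.injEq, Symbol.nonterminal.injEq] at hs
        obtain ⟨rfl, rfl⟩ := hs
        exact ⟨[], s, rfl, rfl, by simp⟩
      · obtain ⟨p, q, rfl, rfl, rfl⟩ := ih hs
        exact ⟨.nonterminal B :: p, q, rfl, rfl, rfl⟩

lemma flatMap_expandSymbol_eq_map_terminal {N : Type} {f : T → List U}
    {t : List (Symbol T N)} {v : List U} (h : t.flatMap (expandSymbol f) = v.map .terminal) :
    ∃ w : List T, t = w.map .terminal ∧ v = w.flatMap f := by
  induction t generalizing v with
  | nil => exact ⟨[], rfl, by simpa using h⟩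
  | cons X t ih =>
    cases X with
    | terminal a =>
      obtain ⟨v₁, v₂, rfl, h₁, h₂⟩ := List.map_eq_append_iff.1 h.symm
      obtain ⟨w, rfl, rfl⟩ := ih h₂.symm
      obtain rfl : v₁ = f a := List.map_injective_iff.2 (fun _ _ ↦ Symbol.terminal.inj) h₁
      exact ⟨a :: w, rfl, rfl⟩
    | nonterminal B => cases v <;> simp [expandSymbol] at h

noncomputable abbrev expand (g : ContextFreeGrammar T) (f : T → List U) :
    ContextFreeGrammar U where
  NT := g.NT
  initial := g.initial
  rules := (g.rules.finite_toSet.image fun r ↦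
    (⟨r.input, r.output.flatMap (expandSymbol f)⟩ : ContextFreeRule U g.NT)).toFinset

variable {g : ContextFreeGrammar T} {f : T → List U}

lemma mem_expand_rules {r' : ContextFreeRule U g.NT} :
    r' ∈ (g.expand f).rules ↔ ∃ r ∈ g.rules, ⟨r.input, r.output.flatMap (expandSymbol f)⟩ = r' := by
  simp

lemma expand_produces_flatMap {s : List (Symbol T g.NT)} {u : List (Symbol U g.NT)}
    (h : (g.expand f).Produces (s.flatMap (expandSymbol f)) u) :
    ∃ t, g.Produces s t ∧ u = t.flatMap (expandSymbol f) := by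
  obtain ⟨r', hr', hrw⟩ := h
  obtain ⟨r, hr, rfl⟩ := mem_expand_rules.1 hr'
  obtain ⟨p', q', hs, rfl⟩ := hrw.exists_parts
  obtain ⟨p, q, rfl, rfl, rfl⟩ :=
    flatMap_expandSymbol_eq_append_nonterminal (by simpa using hs)
  exact ⟨p ++ r.output ++ q, ⟨r, hr, by simpa using r.rewrites_of_exists_parts p q⟩, by simp⟩

lemma expand_derives_flatMap {s' u : List (Symbol U g.NT)} (h : (g.expand f).Derives s' u) :
    ∀ s, s' = s.flatMap (expandSymbol f) → ∃ t, g.Derives s t ∧ u = t.flatMap (expandSymbol f) := by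
  induction h using Relation.ReflTransGen.head_induction_on with
  | refl => exact fun s hs ↦ ⟨s, Derives.refl s, hs⟩
  | head hp _ ih =>
    rintro s rfl
    obtain ⟨t, hst, rfl⟩ := expand_produces_flatMap hp
    obtain ⟨t', htt', rfl⟩ := ih t rfl
    exact ⟨t', hst.trans_derives htt', rfl⟩

lemma language_expand : (g.expand f).language = (·.flatMap f) '' g.language := by
  ext v
  constructor
  · intro hv
    obtain ⟨t, hgt, ht⟩ :=
      expand_derives_flatMap hv [.nonterminal g.initial] (by simp [expandSymbol])
    obtain ⟨w, rfl, rfl⟩ := flatMap_expandSymbol_eq_map_terminal ht.symm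
    exact ⟨w, hgt, rfl⟩
  · rintro ⟨w, hw, rfl⟩
    have hrules : ∀ r ∈ g.rules, (g.expand f).Derives (expandSymbol f (.nonterminal r.input))
        (r.output.flatMap (expandSymbol f)) := fun r hr ↦
      derives_of_mem_rules (g := g.expand f) (mem_expand_rules.2 ⟨r, hr, rfl⟩)
    simpa [flatMap_expandSymbol_map_terminal, expandSymbol] using
      Derives.flatMap (g₁ := g) (g₂ := g.expand f) (expandSymbol f) hrules hw

end Expand

theorem _root_.Language.IsContextFree.image_flatMap {U : Type*} {L : Language T}
    (hL : L.IsContextFree) (f : T → List U) :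
    Language.IsContextFree ((·.flatMap f) '' L) := by
  obtain ⟨g, rfl⟩ := hL
  exact ⟨g.expand f, language_expand⟩

section Interleave

variable {Γ : Type*}

inductive InterleaveNT (N : Type) : Type
  | start
  | filler
  | old (A : N)

open InterleaveNT

def interleaveSymbol {N : Type} : Symbol T N → List (Symbol (T ⊕ Γ) (InterleaveNT N))
  | .terminal a => [.terminal (.inl a), .nonterminal filler]
  | .nonterminal A => [.nonterminal (old A)]

def projectSymbol (g : ContextFreeGrammar T) :
    Symbol (T ⊕ Γ) (InterleaveNT g.NT) → List (Symbol T g.NT)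
  | .terminal (.inl a) => [.terminal a]
  | .terminal (.inr _) => []
  | .nonterminal start => [.nonterminal g.initial]
  | .nonterminal filler => []
  | .nonterminal (old A) => [.nonterminal A]

variable (Γ) in
def interleaveRules (g : ContextFreeGrammar T) :
    Set (ContextFreeRule (T ⊕ Γ) (InterleaveNT g.NT)) :=
  {⟨start, [.nonterminal filler, .nonterminal (old g.initial)]⟩, ⟨filler, []⟩} ∪
    Set.range (fun γ : Γ ↦ ⟨filler, [.terminal (.inr γ), .nonterminal filler]⟩) ∪
    (fun r : ContextFreeRule T g.NT ↦ ⟨old r.input, r.output.flatMap interleaveSymbol⟩) '' g.rules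

variable (Γ) in
lemma interleaveRules_finite [Finite Γ] (g : ContextFreeGrammar T) : (interleaveRules Γ g).Finite :=
  ((Set.toFinite _).union (Set.finite_range _)).union (g.rules.finite_toSet.image _)

/-- Every terminal of `g` is followed by a `filler`, which generates `Γ*`, and the new start
symbol puts one more `filler` in front. -/
noncomputable abbrev interleave (g : ContextFreeGrammar T) (Γ : Type*) [Finite Γ] :
    ContextFreeGrammar (T ⊕ Γ) where
  NT := InterleaveNT g.NT
  initial := start
  rules := (interleaveRules_finite Γ g).toFinset

variable {g : ContextFreeGrammar T}

lemma mem_interleave_rules [Finite Γ] {r : ContextFreeRule (T ⊕ Γ) (InterleaveNT g.NT)} :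
    r ∈ (g.interleave Γ).rules ↔ r ∈ interleaveRules Γ g :=
  Set.Finite.mem_toFinset _

lemma flatMap_interleaveSymbol_flatMap_projectSymbol (s : List (Symbol T g.NT)) :
    (s.flatMap (interleaveSymbol (Γ := Γ))).flatMap (projectSymbol g) = s := by
  induction s with
  | nil => rfl
  | cons X s ih => cases X <;> simp [interleaveSymbol, projectSymbol, ih]

lemma map_terminal_flatMap_projectSymbol (v : List (T ⊕ Γ)) :
    (v.map .terminal).flatMap (projectSymbol g) = (v.filterMap Sum.getLeft?).map .terminal := by
  induction v with
  | nil => rfl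
  | cons c v ih => cases c <;> simp [projectSymbol, ih, List.filterMap_cons]

variable [Finite Γ]

lemma filler_derives_map_terminal (v : List (T ⊕ Γ)) :
    (g.interleave Γ).Derives
      (.nonterminal filler :: ((v.filterMap Sum.getLeft?).map .terminal).flatMap interleaveSymbol)
      (v.map .terminal) := by
  induction v with
  | nil => exact derives_of_mem_rules (mem_interleave_rules.2 (.inl (.inl (.inr rfl))))
  | cons c v ih =>
    cases c with
    | inl a =>
      have hend := derives_of_mem_rules (g := g.interleave Γ) (r := ⟨filler, []⟩)
        (mem_interleave_rules.2 (.inl (.inl (.inr rfl))))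
      simpa [interleaveSymbol] using
        (hend.append_right _).trans (ih.append_left [.terminal (.inl a)])
    | inr γ =>
      have hcons := derives_of_mem_rules (g := g.interleave Γ)
        (mem_interleave_rules.2 (.inl (.inr ⟨γ, rfl⟩)))
      simp only [List.filterMap_cons, Sum.getLeft?_inr, List.map_cons]
      exact (hcons.append_right _).trans (ih.append_left [.terminal (.inr γ)])

lemma language_interleave :
    (g.interleave Γ).language = {v | v.filterMap Sum.getLeft? ∈ g.language} := by
  ext v
  constructor
  · intro hv
    have hrules : ∀ r ∈ (g.interleave Γ).rules,
        g.Derives (projectSymbol (Γ := Γ) g (.nonterminal r.input))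
          (r.output.flatMap (projectSymbol g)) := by
      intro r hr
      rcases mem_interleave_rules.1 hr with (⟨rfl | rfl⟩ | ⟨γ, rfl⟩) | ⟨r₀, hr₀, rfl⟩
      · simpa [projectSymbol] using Derives.refl _
      · exact Derives.refl _
      · exact Derives.refl _
      · simpa [flatMap_interleaveSymbol_flatMap_projectSymbol, projectSymbol] using
          derives_of_mem_rules hr₀
    show g.Derives [.nonterminal g.initial] ((v.filterMap Sum.getLeft?).map .terminal)
    simpa [map_terminal_flatMap_projectSymbol, projectSymbol] using Derives.flatMap _ hrules hv
  · intro hv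
    have hrules : ∀ r ∈ g.rules, (g.interleave Γ).Derives (interleaveSymbol (.nonterminal r.input))
        (r.output.flatMap interleaveSymbol) :=
      fun r hr ↦ derives_of_mem_rules (mem_interleave_rules.2 (.inr ⟨r, hr, rfl⟩))
    have hstart := derives_of_mem_rules (g := g.interleave Γ)
      (mem_interleave_rules.2 (.inl (.inl (.inl rfl))))
    have hlift : (g.interleave Γ).Derives [.nonterminal filler, .nonterminal (old g.initial)]
        (.nonterminal filler ::
          ((v.filterMap Sum.getLeft?).map .terminal).flatMap interleaveSymbol) := by
      simpa [interleaveSymbol] using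
        (Derives.flatMap (g₁ := g) _ hrules hv).append_left [.nonterminal filler]
    exact hstart.trans (hlift.trans (filler_derives_map_terminal v))

end Interleave

theorem _root_.Language.IsContextFree.preimage_filterMap_getLeft {L : Language T}
    (hL : L.IsContextFree) (Γ : Type*) [Finite Γ] :
    Language.IsContextFree {v : List (T ⊕ Γ) | v.filterMap Sum.getLeft? ∈ L} := by
  obtain ⟨g, rfl⟩ := hL
  exact ⟨g.interleave Γ, language_interleave⟩

section Lift

variable {σ N : Type} {M : NFA T σ}

/-- `Lift M p s q s'`: along some run of `M` from `p` to `q` reading the terminals of `s`, the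
word `s'` replaces each nonterminal `A` of `s` by `(p', A, q')`, where `p'` and `q'` are the
states of the run before and after `A`. -/
inductive Lift (M : NFA T σ) :
    σ → List (Symbol T N) → σ → List (Symbol T (Option (σ × N × σ))) → Prop
  | nil (p : σ) : Lift M p [] p []
  | terminal {p m q : σ} {a : T} {s s'} :
      m ∈ M.step p a → Lift M m s q s' → Lift M p (.terminal a :: s) q (.terminal a :: s')
  | nonterminal {p m q : σ} {A : N} {s s'} :
      Lift M m s q s' → Lift M p (.nonterminal A :: s) q (.nonterminal (some (p, A, m)) :: s')

variable {p q : σ} {s : List (Symbol T N)} {s' : List (Symbol T (Option (σ × N × σ)))}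

lemma Lift.append {m : σ} {s₁ s₂ : List (Symbol T N)}
    {s₁' s₂' : List (Symbol T (Option (σ × N × σ)))}
    (h₁ : Lift M p s₁ m s₁') (h₂ : Lift M m s₂ q s₂') : Lift M p (s₁ ++ s₂) q (s₁' ++ s₂') := by
  induction h₁ with
  | nil => exact h₂
  | terminal hm _ ih => exact .terminal hm (ih h₂)
  | nonterminal _ ih => exact .nonterminal (ih h₂)

lemma Lift.exists_of_append_left {s₁ s₂ : List (Symbol T N)} (h : Lift M p (s₁ ++ s₂) q s') :
    ∃ m s₁' s₂', s' = s₁' ++ s₂' ∧ Lift M p s₁ m s₁' ∧ Lift M m s₂ q s₂' := by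
  induction s₁ generalizing p s' with
  | nil => exact ⟨p, [], s', rfl, .nil p, h⟩
  | cons X s₁ ih =>
    cases h with
    | terminal hm h =>
      obtain ⟨m, s₁', s₂', rfl, h₁, h₂⟩ := ih h
      exact ⟨m, _, s₂', rfl, .terminal hm h₁, h₂⟩
    | nonterminal h =>
      obtain ⟨m, s₁', s₂', rfl, h₁, h₂⟩ := ih h
      exact ⟨m, _, s₂', rfl, .nonterminal h₁, h₂⟩

lemma Lift.exists_of_append_right {s₁' s₂' : List (Symbol T (Option (σ × N × σ)))}
    (h : Lift M p s q (s₁' ++ s₂')) :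
    ∃ m s₁ s₂, s = s₁ ++ s₂ ∧ Lift M p s₁ m s₁' ∧ Lift M m s₂ q s₂' := by
  induction s₁' generalizing p s with
  | nil => exact ⟨p, [], s, rfl, .nil p, h⟩
  | cons X s₁' ih =>
    cases h with
    | terminal hm h =>
      obtain ⟨m, s₁, s₂, rfl, h₁, h₂⟩ := ih h
      exact ⟨m, _, s₂, rfl, .terminal hm h₁, h₂⟩
    | nonterminal h =>
      obtain ⟨m, s₁, s₂, rfl, h₁, h₂⟩ := ih h
      exact ⟨m, _, s₂, rfl, .nonterminal h₁, h₂⟩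

lemma lift_singleton_nonterminal (M : NFA T σ) (p q : σ) (A : N) :
    Lift M p [.nonterminal A] q [.nonterminal (some (p, A, q))] :=
  .nonterminal (.nil q)

lemma Lift.eq_of_singleton_nonterminal_left {A : N} (h : Lift M p [.nonterminal A] q s') :
    s' = [.nonterminal (some (p, A, q))] := by
  rcases h with _ | _ | ⟨⟨⟩⟩
  rfl

lemma Lift.eq_of_singleton_nonterminal_right {p' q' : σ} {A : N}
    (h : Lift M p s q [.nonterminal (some (p', A, q'))]) :
    s = [.nonterminal A] ∧ p = p' ∧ q = q' := by
  rcases h with _ | _ | ⟨⟨⟩⟩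
  exact ⟨rfl, rfl, rfl⟩

lemma lift_map_terminal_right_iff {w : List T} :
    Lift M p s q (w.map .terminal) ↔ s = w.map .terminal ∧ q ∈ M.evalFrom {p} w := by
  induction w generalizing p s with
  | nil =>
    constructor
    · rintro ⟨⟩
      exact ⟨rfl, rfl⟩
    · rintro ⟨rfl, rfl⟩
      exact .nil q
  | cons a w ih =>
    rw [NFA.mem_evalFrom_singleton_cons]
    constructor
    · rintro (_ | ⟨hm, h⟩)
      obtain ⟨rfl, hq⟩ := ih.1 h
      exact ⟨rfl, _, hm, hq⟩
    · rintro ⟨rfl, m, hm, hq⟩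
      exact .terminal hm (ih.2 ⟨rfl, hq⟩)

lemma finite_setOf_lift [Finite σ] (M : NFA T σ) (p : σ) (s : List (Symbol T N)) (q : σ) :
    {s' | Lift M p s q s'}.Finite := by
  induction s generalizing p with
  | nil => exact (Set.finite_singleton []).subset (by rintro _ ⟨⟩; rfl)
  | cons X s ih =>
    cases X with
    | terminal a =>
      refine (Set.finite_iUnion fun m ↦ (ih m).image (.terminal a :: ·)).subset ?_
      rintro _ (_ | ⟨_, h⟩)
      exact Set.mem_iUnion.2 ⟨_, _, h, rfl⟩
    | nonterminal A =>
      refine (Set.finite_iUnion fun m ↦ (ih m).image (.nonterminal (some (p, A, m)) :: ·)).subset ?_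
      rintro _ (_ | _ | ⟨h⟩)
      exact Set.mem_iUnion.2 ⟨_, _, h, rfl⟩

end Lift

section Inter

variable {σ : Type} (g : ContextFreeGrammar T) (M : NFA T σ)

def interRules : Set (ContextFreeRule T (Option (σ × g.NT × σ))) :=
  {r | (r.input = none ∧ ∃ p ∈ M.start, ∃ q ∈ M.accept,
      r.output = [.nonterminal (some (p, g.initial, q))]) ∨
    ∃ r₀ ∈ g.rules, ∃ p q, r.input = some (p, r₀.input, q) ∧ Lift M p r₀.output q r.output}

lemma interRules_finite [Finite σ] : (interRules g M).Finite := by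
  refine ((Set.finite_range fun pq : σ × σ ↦
      (⟨none, [.nonterminal (some (pq.1, g.initial, pq.2))]⟩ :
        ContextFreeRule T (Option (σ × g.NT × σ)))).union
    (g.rules.finite_toSet.biUnion fun r₀ _ ↦ Set.finite_iUnion fun p ↦ Set.finite_iUnion fun q ↦
      (finite_setOf_lift M p r₀.output q).image fun s' ↦
        (⟨some (p, r₀.input, q), s'⟩ : ContextFreeRule T (Option (σ × g.NT × σ))))).subset ?_
  rintro ⟨_, _⟩ (⟨rfl, p, -, q, -, rfl⟩ | ⟨r₀, hr₀, p, q, rfl, h⟩)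
  · exact .inl ⟨(p, q), rfl⟩
  · exact .inr (Set.mem_biUnion hr₀ (Set.mem_iUnion.2 ⟨p, Set.mem_iUnion.2 ⟨q, _, h, rfl⟩⟩))

/-- The triple construction: the nonterminal `(p, A, q)` generates the words of `A` that lead `M`
from `p` to `q`. -/
noncomputable abbrev inter [Finite σ] : ContextFreeGrammar T where
  NT := Option (σ × g.NT × σ)
  initial := none
  rules := (interRules_finite g M).toFinset

variable {g M} [Finite σ] {p q : σ} {s t : List (Symbol T g.NT)}

lemma mem_inter_rules {r : ContextFreeRule T (Option (σ × g.NT × σ))} :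
    r ∈ (g.inter M).rules ↔ r ∈ interRules g M :=
  Set.Finite.mem_toFinset _

lemma Lift.inter_produces {s' t' : List (Symbol T (Option (σ × g.NT × σ)))}
    (hs : Lift M p s q s') (h : (g.inter M).Produces s' t') :
    ∃ t, g.Produces s t ∧ Lift M p t q t' := by
  obtain ⟨r, hr, hrw⟩ := h
  obtain ⟨u, v, rfl, rfl⟩ := hrw.exists_parts
  obtain ⟨m₂, s₁₂, s₃, rfl, h₁₂, h₃⟩ := hs.exists_of_append_right
  obtain ⟨m₁, s₁, s₂, rfl, h₁, h₂⟩ := h₁₂.exists_of_append_right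
  rcases mem_inter_rules.1 hr with ⟨hnone, -⟩ | ⟨r₀, hr₀, p', q', hin, hout⟩
  · rw [hnone] at h₂
    rcases h₂ with _ | _ | _
  · rw [hin] at h₂
    obtain ⟨rfl, rfl, rfl⟩ := h₂.eq_of_singleton_nonterminal_right
    exact ⟨s₁ ++ r₀.output ++ s₃, ⟨r₀, hr₀, r₀.rewrites_of_exists_parts s₁ s₃⟩,
      (h₁.append hout).append h₃⟩

lemma Lift.inter_derives {s' t' : List (Symbol T (Option (σ × g.NT × σ)))}
    (hs : Lift M p s q s') (h : (g.inter M).Derives s' t') :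
    ∃ t, g.Derives s t ∧ Lift M p t q t' := by
  induction h with
  | refl => exact ⟨s, Derives.refl s, hs⟩
  | tail _ hp ih =>
    obtain ⟨t, hst, ht⟩ := ih
    obtain ⟨t', htt', ht'⟩ := ht.inter_produces hp
    exact ⟨t', hst.trans_produces htt', ht'⟩

lemma Produces.exists_lift_inter {t' : List (Symbol T (Option (σ × g.NT × σ)))}
    (h : g.Produces s t) (ht : Lift M p t q t') :
    ∃ s', Lift M p s q s' ∧ (g.inter M).Produces s' t' := by
  obtain ⟨r, hr, hrw⟩ := h
  obtain ⟨u, v, rfl, rfl⟩ := hrw.exists_parts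
  obtain ⟨m₂, t₁₂, t₃, rfl, h₁₂, h₃⟩ := ht.exists_of_append_left
  obtain ⟨m₁, t₁, t₂, rfl, h₁, h₂⟩ := h₁₂.exists_of_append_left
  refine ⟨t₁ ++ [.nonterminal (some (m₁, r.input, m₂))] ++ t₃,
    ((h₁.append (lift_singleton_nonterminal M m₁ m₂ r.input)).append h₃),
    ⟨⟨some (m₁, r.input, m₂), t₂⟩, mem_inter_rules.2 (.inr ⟨r, hr, m₁, m₂, rfl, h₂⟩), ?_⟩⟩
  exact ContextFreeRule.rewrites_of_exists_parts _ t₁ t₃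

lemma Derives.exists_lift_inter {t' : List (Symbol T (Option (σ × g.NT × σ)))}
    (h : g.Derives s t) (ht : Lift M p t q t') :
    ∃ s', Lift M p s q s' ∧ (g.inter M).Derives s' t' := by
  induction h generalizing t' with
  | refl => exact ⟨t', ht, Derives.refl (g := g.inter M) t'⟩
  | tail _ hp ih =>
    obtain ⟨u', hu, hut⟩ := hp.exists_lift_inter ht
    obtain ⟨s', hs, hsu⟩ := ih hu
    exact ⟨s', hs, hsu.trans_produces hut⟩

lemma language_inter : (g.inter M).language = g.language ⊓ M.accepts := by
  ext w
  simp only [Language.mem_inf, NFA.mem_accepts]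
  constructor
  · intro hw
    rcases Derives.eq_or_head hw with hw | ⟨u, hu, hw⟩
    · cases w <;> simp at hw
    obtain ⟨r, hr, hin, rfl⟩ := produces_singleton_nonterminal_iff.1 hu
    rcases mem_inter_rules.1 hr with ⟨-, p, hp, q, hq, hout⟩ | ⟨r₀, -, p', q', hin', -⟩
    · rw [hout] at hw
      obtain ⟨t, hgt, ht⟩ := (lift_singleton_nonterminal M p q g.initial).inter_derives hw
      obtain ⟨rfl, hqw⟩ := lift_map_terminal_right_iff.1 ht
      exact ⟨hgt, q, hq, NFA.mem_evalFrom_iff_exists.2 ⟨p, hp, hqw⟩⟩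
    · simp [hin] at hin'
  · rintro ⟨hw, q, hq, hqw⟩
    obtain ⟨p, hp, hqw⟩ := NFA.mem_evalFrom_iff_exists.1 hqw
    obtain ⟨s', hs', hs'w⟩ :=
      Derives.exists_lift_inter hw (lift_map_terminal_right_iff.2 ⟨rfl, hqw⟩)
    rw [hs'.eq_of_singleton_nonterminal_left] at hs'w
    refine Produces.trans_derives ⟨⟨none, [.nonterminal (some (p, g.initial, q))]⟩,
      mem_inter_rules.2 (.inl ⟨rfl, p, hp, q, hq, rfl⟩), ?_⟩ hs'w
    exact ContextFreeRule.Rewrites.input_output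

end Inter

theorem _root_.Language.IsContextFree.inf_accepts {σ : Type} {L : Language T}
    (hL : L.IsContextFree) (M : NFA T σ) [Finite σ] : Language.IsContextFree (L ⊓ M.accepts) := by
  obtain ⟨g, rfl⟩ := hL
  exact ⟨g.inter M, language_inter⟩

end ContextFreeGrammar

section Encoding

variable {α : Type} {Δ : Type*} (e : Δ → List α) (N : ℕ)

def encode (w : List Δ) : List (α ⊕ Δ) :=
  w.flatMap fun d ↦ .inr d :: (e d).map .inl

/-- Reads `encode e w` block by block; a state is the part of the current block `e d` still to be
read, and `N` bounds the length of the blocks. -/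
def encodingNFA : NFA (α ⊕ Δ) {l : List α // l.length ≤ N} where
  step l
    | .inl a => {l' | l.1 = a :: l'.1}
    | .inr d => {l' | l.1 = [] ∧ l'.1 = e d}
  start := {⟨[], N.zero_le⟩}
  accept := {⟨[], N.zero_le⟩}

variable {e N}

lemma filterMap_getLeft_encode (w : List Δ) :
    (encode e w).filterMap Sum.getLeft? = w.flatMap e := by
  simp [encode, List.filterMap_flatMap, List.filterMap_cons, List.filterMap_map, Function.comp_def]

lemma flatMap_getRight_encode (w : List Δ) :
    (encode e w).flatMap (fun c ↦ c.getRight?.toList) = w := by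
  induction w with
  | nil => rfl
  | cons d w ih => simp_all [encode, List.flatMap_map]

lemma cons_eq_encode_iff {c : α ⊕ Δ} {x : List (α ⊕ Δ)} {w : List Δ} :
    c :: x = encode e w ↔ ∃ d w', w = d :: w' ∧ c = .inr d ∧ x = (e d).map .inl ++ encode e w' := by
  cases w <;> simp [encode, eq_comm]

variable {l l' : {l : List α // l.length ≤ N}}

@[simp]
lemma mem_encodingNFA_step_inl {a : α} :
    l' ∈ (encodingNFA e N).step l (.inl a) ↔ l.1 = a :: l'.1 :=
  Iff.rfl

@[simp]
lemma mem_encodingNFA_step_inr {d : Δ} :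
    l' ∈ (encodingNFA e N).step l (.inr d) ↔ l.1 = [] ∧ l'.1 = e d :=
  Iff.rfl

lemma nil_mem_evalFrom_encodingNFA_iff (hN : ∀ d, (e d).length ≤ N) (x : List (α ⊕ Δ)) :
    ⟨[], N.zero_le⟩ ∈ (encodingNFA e N).evalFrom {l} x ↔
      ∃ w, x = l.1.map .inl ++ encode e w := by
  induction x generalizing l with
  | nil =>
    simp only [NFA.evalFrom_nil, Set.mem_singleton_iff, Subtype.ext_iff, List.nil_eq,
      List.append_eq_nil_iff, List.map_eq_nil_iff]
    exact ⟨fun h ↦ ⟨[], h, rfl⟩, fun ⟨_, h, _⟩ ↦ h⟩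
  | cons c x ih =>
    rw [NFA.mem_evalFrom_singleton_cons]
    obtain ⟨_ | ⟨b, t⟩, hl⟩ := l <;> cases c
    · simp [cons_eq_encode_iff]
    · simp [ih, cons_eq_encode_iff, hN]
    · have ht : t.length ≤ N := Nat.le_of_succ_le hl
      simp [ih, ht, eq_comm]
    · simp

lemma accepts_encodingNFA (hN : ∀ d, (e d).length ≤ N) :
    (encodingNFA e N).accepts = Set.range (encode e) := by
  ext x
  change (∃ S ∈ ({⟨[], N.zero_le⟩} : Set _),
    S ∈ (encodingNFA e N).evalFrom {⟨[], N.zero_le⟩} x) ↔ _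
  simp only [Set.mem_singleton_iff, exists_eq_left, nil_mem_evalFrom_encodingNFA_iff hN,
    List.map_nil, List.nil_append]
  exact exists_congr fun _ ↦ eq_comm

end Encoding

lemma FreeMonoid.map_ofList_flatMap {α Δ M : Type*} [Monoid M] {σ : FreeMonoid α →* M}
    {τ : FreeMonoid Δ →* M} {e : Δ → List α} (he : ∀ d, σ (.ofList (e d)) = τ (.of d))
    (w : List Δ) : σ (.ofList (w.flatMap e)) = τ (.ofList w) := by
  induction w with
  | nil => simp
  | cons d w ih => rw [List.flatMap_cons, ofList_append, map_mul, ih, he, ofList_cons, map_mul]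

theorem wordProblem_contextFree_independent_of_generators_general
    {α Δ : Type} [Fintype α] [Fintype Δ] {G : Type} [Group G]
    (σ : FreeMonoid α →* G) (hσ : Function.Surjective σ)
    (τ : FreeMonoid Δ →* G)
    (h : Language.IsContextFree {w : List α | σ (FreeMonoid.ofList w) = 1}) :
    Language.IsContextFree {w : List Δ | τ (FreeMonoid.ofList w) = 1} := by
  choose e he using fun d ↦ hσ (τ (FreeMonoid.of d))
  have hσe : ∀ w, σ (.ofList (w.flatMap fun d ↦ (e d).toList)) = τ (.ofList w) :=
    FreeMonoid.map_ofList_flatMap (by simpa using he)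
  obtain ⟨N, hN⟩ := (Set.finite_range fun d ↦ (e d).toList.length).bddAbove
  have hWP : {w : List Δ | τ (FreeMonoid.ofList w) = 1} =
      (·.flatMap fun c ↦ c.getRight?.toList) ''
        ({v | v.filterMap Sum.getLeft? ∈ {w : List α | σ (FreeMonoid.ofList w) = 1}} ⊓
          (encodingNFA (fun d ↦ (e d).toList) N).accepts) := by
    rw [accepts_encodingNFA fun d ↦ hN ⟨d, rfl⟩]
    ext w
    constructor
    · intro hw
      exact ⟨encode _ w, ⟨by simpa [filterMap_getLeft_encode, hσe] using hw, w, rfl⟩,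
        flatMap_getRight_encode w⟩
    · rintro ⟨_, ⟨hv, w, rfl⟩, rfl⟩
      simpa [flatMap_getRight_encode, filterMap_getLeft_encode, hσe] using hv
  rw [hWP]
  have : Finite {l : List α // l.length ≤ N} := (List.finite_length_le α N).to_subtype
  exact ((h.preimage_filterMap_getLeft Δ).inf_accepts _).image_flatMap _

/-- Theorem 6.4 (for context-free languages): if the word problem of a group `G` is
context-free with respect to one choice of generators, then it is context-free with
respect to any choice of generators. -/
theorem wordProblem_contextFree_independent_of_generators
    {α Δ : Type} [Fintype α] [Fintype Δ] {G : Type} [Group G]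
    (σ : FreeMonoid α →* G) (hσ : Function.Surjective σ)
    (τ : FreeMonoid Δ →* G) (hτ : Function.Surjective τ)
    (h : Language.IsContextFree {w : List α | σ (FreeMonoid.ofList w) = 1}) :
    Language.IsContextFree {w : List Δ | τ (FreeMonoid.ofList w) = 1} :=
  wordProblem_contextFree_independent_of_generators_general σ hσ τ h
end

section
/- Let G be a group and H a subgroup of finite index in G. Suppose H has a surjective monoid homomorphism μ : Δ* → H from a free monoid over a finite alphabet with μ⁻¹(1) context-free, and let σ : Σ* → G be any surjective monoid homomorphism from a free monoid over a finite alphabet. Then σ⁻¹(1) is context-free. -/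
/-!
Fix representatives of the cosets `G ⧸ H`. Reading a word over `α` letter by letter, a finite
automaton can track the coset of the prefix read so far, and each letter contributes an element of
`H` (the inverse of the current representative, times the letter, times the next representative),
which we spell as a word over `Δ`. Then `σ w = 1` exactly when the automaton returns to the trivial coset
and its output lies in the word problem of `H`.

So it suffices that preimages of context-free languages under deterministic finite-state
transducers are context-free. For a grammar `g` of the target language, the new grammar has
nonterminals `seg p β p'`, where `β` is a sentential form of `g` and `p`, `p'` are configurations
of the transducer, i.e. a state and the part of the output produced but not yet matched. It
generates the inputs read on the way from `p` to `p'` while the output matched is a word derived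
from `β`. Only finitely many configurations occur, since a pending output is a suffix of one of
the finitely many outputs of single letters.
-/

namespace ContextFreeGrammar

variable {T N : Type*}

inductive Realizes (P : N → List T → Prop) : List (Symbol T N) → List T → Prop
  | nil : Realizes P [] []
  | terminal (a : T) {f : List (Symbol T N)} {u : List T} :
      Realizes P f u → Realizes P (.terminal a :: f) (a :: u)
  | nonterminal {n : N} {u₁ : List T} {f : List (Symbol T N)} {u₂ : List T} :
      P n u₁ → Realizes P f u₂ → Realizes P (.nonterminal n :: f) (u₁ ++ u₂)

variable {P : N → List T → Prop}

namespace Realizes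

lemma append {f₁ f₂ : List (Symbol T N)} {u₁ u₂ : List T}
    (h₁ : Realizes P f₁ u₁) (h₂ : Realizes P f₂ u₂) : Realizes P (f₁ ++ f₂) (u₁ ++ u₂) := by
  induction h₁ with
  | nil => exact h₂
  | terminal a _ ih => exact ih.terminal a
  | nonterminal hn _ ih => simpa using ih.nonterminal hn

lemma exists_of_append {f₁ f₂ : List (Symbol T N)} {u : List T}
    (h : Realizes P (f₁ ++ f₂) u) :
    ∃ u₁ u₂, u = u₁ ++ u₂ ∧ Realizes P f₁ u₁ ∧ Realizes P f₂ u₂ := by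
  induction f₁ generalizing u with
  | nil => exact ⟨[], u, rfl, nil, h⟩
  | cons x f₁ ih =>
    cases h with
    | terminal a h =>
      obtain ⟨u₁, u₂, rfl, h₁, h₂⟩ := ih h
      exact ⟨a :: u₁, u₂, rfl, h₁.terminal a, h₂⟩
    | nonterminal hn h =>
      obtain ⟨u₁, u₂, rfl, h₁, h₂⟩ := ih h
      exact ⟨_ ++ u₁, u₂, by simp, h₁.nonterminal hn, h₂⟩

end Realizes

lemma realizes_map_terminal (u : List T) : Realizes P (u.map .terminal) u := by
  induction u with
  | nil => exact .nil
  | cons a u ih => exact ih.terminal a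

lemma realizes_nonterminal_singleton {n : N} {u : List T} :
    Realizes P [.nonterminal n] u ↔ P n u := by
  refine ⟨fun h => ?_, fun h => by simpa using Realizes.nonterminal h .nil⟩
  rcases h with _ | _ | ⟨hn, ⟨⟩⟩
  simpa using hn

lemma realizes_nonterminal_pair {n₁ n₂ : N} {u : List T} :
    Realizes P [.nonterminal n₁, .nonterminal n₂] u ↔
      ∃ u₁ u₂, u = u₁ ++ u₂ ∧ P n₁ u₁ ∧ P n₂ u₂ := by
  constructor
  · intro h
    obtain ⟨u₁, u₂, rfl, h₁, h₂⟩ := Realizes.exists_of_append (f₁ := [_]) h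
    exact ⟨u₁, u₂, rfl, realizes_nonterminal_singleton.mp h₁,
      realizes_nonterminal_singleton.mp h₂⟩
  · rintro ⟨u₁, u₂, rfl, h₁, h₂⟩
    exact (realizes_nonterminal_singleton.mpr h₁).append (f₁ := [_])
      (realizes_nonterminal_singleton.mpr h₂)

variable {g : ContextFreeGrammar T}

lemma Derives.append {f₁ f₁' f₂ f₂' : List (Symbol T g.NT)}
    (h₁ : g.Derives f₁ f₁') (h₂ : g.Derives f₂ f₂') : g.Derives (f₁ ++ f₂) (f₁' ++ f₂') :=
  (h₁.append_right f₂).trans (h₂.append_left f₁')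

lemma eq_nil_of_derives_nil {w : List (Symbol T g.NT)} (h : g.Derives [] w) : w = [] := by
  rcases h.eq_or_head with h | ⟨_, hp, _⟩
  · exact h.symm
  · obtain ⟨_, _, hmem⟩ := hp.exists_nonterminal_input_mem
    simp at hmem

section Induction

variable {P : g.NT → List T → Prop}
  (hP : ∀ r ∈ g.rules, ∀ u, Realizes P r.output u → P r.input u)
include hP

lemma Realizes.of_produces {f f' : List (Symbol T g.NT)} {u : List T}
    (h : g.Produces f f') (h' : Realizes P f' u) : Realizes P f u := by
  obtain ⟨r, hr, hrw⟩ := h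
  obtain ⟨x, y, rfl, rfl⟩ := hrw.exists_parts
  obtain ⟨u₁, u₂₃, rfl, hx, h₂₃⟩ := Realizes.exists_of_append (by simpa using h')
  obtain ⟨u₂, u₃, rfl, hmid, hy⟩ := h₂₃.exists_of_append
  simpa using hx.append ((realizes_nonterminal_singleton.mpr (hP r hr u₂ hmid)).append hy)

lemma Realizes.of_derives {f f' : List (Symbol T g.NT)} {u : List T}
    (h : g.Derives f f') (h' : Realizes P f' u) : Realizes P f u := by
  induction h with
  | refl => exact h'
  | tail _ hlast ih => exact ih (Realizes.of_produces hP hlast h')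

theorem initial_of_mem_language {u : List T} (hu : u ∈ g.language) : P g.initial u :=
  realizes_nonterminal_singleton.mp ((realizes_map_terminal u).of_derives hP hu)

end Induction

end ContextFreeGrammar

namespace DFA

variable {α : Type*} {σ Δ : Type}

section Output

variable (M : DFA α σ) (out : σ → α → List Δ)

def outputFrom : σ → List α → List Δ
  | _, [] => []
  | s, a :: x => out s a ++ outputFrom (M.step s a) x

@[simp] lemma outputFrom_nil (s : σ) : M.outputFrom out s [] = [] := rfl

@[simp] lemma outputFrom_cons (s : σ) (a : α) (x : List α) :
    M.outputFrom out s (a :: x) = out s a ++ M.outputFrom out (M.step s a) x := rfl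

/-- A configuration `(s, b)` is a state together with output `b` already produced but not yet
matched. `M.OutputPath out p v u p'` says that starting from `p`, reading the input `u` while
matching the produced output against `v` can end in `p'`; a letter is read only when the buffer
is empty. -/
inductive OutputPath : σ × List Δ → List Δ → List α → σ × List Δ → Prop
  | nil (p : σ × List Δ) : OutputPath p [] [] p
  | read (s : σ) (a : α) {v : List Δ} {u : List α} {p' : σ × List Δ} :
      OutputPath (M.step s a, out s a) v u p' → OutputPath (s, []) v (a :: u) p'
  | consume (s : σ) (d : Δ) (b : List Δ) {v : List Δ} {u : List α} {p' : σ × List Δ} :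
      OutputPath (s, b) v u p' → OutputPath (s, d :: b) (d :: v) u p'

def bufferedConfigs : Set (σ × List Δ) := {p | p.2 = [] ∨ ∃ s a, p.2 <:+ out s a}

variable {M out}

lemma finite_bufferedConfigs [Finite α] [Finite σ] : (bufferedConfigs out).Finite := by
  refine (Set.finite_univ.prod ((Set.finite_singleton []).union (Set.finite_iUnion fun s =>
    Set.finite_iUnion fun a => List.finite_toSet (out s a).tails))).subset ?_
  rintro ⟨s, b⟩ (h | ⟨s', a, h⟩)
  · simp_all
  · simp only [Set.mem_prod, Set.mem_univ, Set.mem_union, Set.mem_iUnion, Set.mem_ofPred_eq,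
      List.mem_tails, true_and]
    exact Or.inr ⟨s', a, h⟩

namespace OutputPath

lemma append {p q p' : σ × List Δ} {v v' : List Δ} {u u' : List α}
    (h : M.OutputPath out p v u q) (h' : M.OutputPath out q v' u' p') :
    M.OutputPath out p (v ++ v') (u ++ u') p' := by
  induction h with
  | nil => exact h'
  | read s a _ ih => exact read s a (ih h')
  | consume s d b _ ih => exact consume s d b (ih h')

lemma exists_of_append {p p' : σ × List Δ} {v₁ v₂ : List Δ} {u : List α}
    (h : M.OutputPath out p (v₁ ++ v₂) u p') :
    ∃ q u₁ u₂, u = u₁ ++ u₂ ∧ M.OutputPath out p v₁ u₁ q ∧ M.OutputPath out q v₂ u₂ p' := by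
  generalize hv : v₁ ++ v₂ = v at h
  induction h generalizing v₁ with
  | nil p =>
    obtain ⟨rfl, rfl⟩ := List.append_eq_nil_iff.mp hv
    exact ⟨p, [], [], rfl, nil p, nil p⟩
  | read s a h ih =>
    cases v₁ with
    | nil => exact ⟨_, [], _, rfl, nil _, by simpa [← hv] using read s a h⟩
    | cons d v₁ =>
      obtain ⟨q, u₁, u₂, rfl, h₁, h₂⟩ := ih hv
      exact ⟨q, a :: u₁, u₂, rfl, read s a h₁, h₂⟩
  | consume s d b h ih =>
    cases v₁ with
    | nil => exact ⟨_, [], _, rfl, nil _, by simpa [← hv] using consume s d b h⟩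
    | cons d' v₁ =>
      obtain ⟨rfl, hv'⟩ := List.cons_eq_cons.mp (by simpa using hv)
      obtain ⟨q, u₁, u₂, rfl, h₁, h₂⟩ := ih hv'
      exact ⟨q, u₁, u₂, rfl, consume s d' b h₁, h₂⟩

lemma exists_of_cons {p p' : σ × List Δ} {d : Δ} {v : List Δ} {u : List α}
    (h : M.OutputPath out p (d :: v) u p') :
    ∃ s b u₁ u₂, u = u₁ ++ u₂ ∧ M.OutputPath out p [] u₁ (s, d :: b) ∧
      M.OutputPath out (s, b) v u₂ p' := by
  generalize hv : d :: v = w at h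
  induction h with
  | nil => cases hv
  | read s a _ ih =>
    obtain ⟨s', b, u₁, u₂, rfl, h₁, h₂⟩ := ih hv
    exact ⟨s', b, a :: u₁, u₂, rfl, read s a h₁, h₂⟩
  | consume s d' b h =>
    obtain ⟨rfl, rfl⟩ := List.cons_eq_cons.mp hv
    exact ⟨s, b, [], _, rfl, nil _, h⟩

lemma mem_bufferedConfigs {p p' : σ × List Δ} {v : List Δ} {u : List α}
    (h : M.OutputPath out p v u p') (hp : p ∈ bufferedConfigs out) :
    p' ∈ bufferedConfigs out := by
  induction h with
  | nil => exact hp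
  | read s a _ ih => exact ih (Or.inr ⟨s, a, List.suffix_refl _⟩)
  | consume s d b _ ih =>
    refine ih (Or.inr ?_)
    rcases hp with h | ⟨s', a, h⟩
    · cases h
    · exact ⟨s', a, (List.suffix_cons d b).trans h⟩

lemma prepend_buffer {s : σ} {b : List Δ} {v : List Δ} {u : List α} {p' : σ × List Δ}
    (h : M.OutputPath out (s, b) v u p') (w : List Δ) :
    M.OutputPath out (s, w ++ b) (w ++ v) u p' := by
  induction w with
  | nil => exact h
  | cons d w ih => exact consume s d _ ih

lemma output_eq {p p' : σ × List Δ} {v : List Δ} {u : List α}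
    (h : M.OutputPath out p v u p') :
    p.2 ++ M.outputFrom out p.1 u = v ++ p'.2 ∧ M.evalFrom p.1 u = p'.1 := by
  induction h with
  | nil => simp [evalFrom_nil]
  | read s a _ ih => simpa [evalFrom_cons] using ih
  | consume s d b _ ih => simpa using ih

end OutputPath

lemma outputPath_outputFrom (s : σ) (u : List α) :
    M.OutputPath out (s, []) (M.outputFrom out s u) u (M.evalFrom s u, []) := by
  induction u generalizing s with
  | nil => exact .nil _
  | cons a u ih => exact .read s a (by simpa using (ih (M.step s a)).prepend_buffer (out s a))

lemma outputPath_iff {s s' : σ} {v : List Δ} {u : List α} :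
    M.OutputPath out (s, []) v u (s', []) ↔ M.outputFrom out s u = v ∧ M.evalFrom s u = s' := by
  refine ⟨fun h => by simpa using h.output_eq, ?_⟩
  rintro ⟨rfl, rfl⟩
  exact outputPath_outputFrom s u

end Output

inductive PreimageItem (σ Δ N : Type)
  | start
  | seg (p : σ × List Δ) (β : List (Symbol Δ N)) (p' : σ × List Δ)

section Grammar

open ContextFreeGrammar

variable (M : DFA α σ) (out : σ → α → List Δ) (g : ContextFreeGrammar Δ)

inductive IsPreimageRule : ContextFreeRule α (PreimageItem σ Δ g.NT) → Prop
  | start {q : σ × List Δ} {s : σ} (hq : q ∈ bufferedConfigs out) (hs : s ∈ M.accept) :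
      IsPreimageRule ⟨.start, [.nonterminal (.seg (M.start, []) [.nonterminal g.initial] q),
        .nonterminal (.seg q [] (s, []))]⟩
  | expand {r : ContextFreeRule Δ g.NT} (hr : r ∈ g.rules) {p p' : σ × List Δ}
      (hp : p ∈ bufferedConfigs out) (hp' : p' ∈ bufferedConfigs out) :
      IsPreimageRule ⟨.seg p [.nonterminal r.input] p', [.nonterminal (.seg p r.output p')]⟩
  | split {r : ContextFreeRule Δ g.NT} (hr : r ∈ g.rules) {x : Symbol Δ g.NT}
      {β : List (Symbol Δ g.NT)} (hβ : x :: β <:+ r.output) {p q p' : σ × List Δ}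
      (hp : p ∈ bufferedConfigs out) (hq : q ∈ bufferedConfigs out)
      (hp' : p' ∈ bufferedConfigs out) :
      IsPreimageRule
        ⟨.seg p (x :: β) p', [.nonterminal (.seg p [x] q), .nonterminal (.seg q β p')]⟩
  | consume {p : σ × List Δ} {s : σ} {d : Δ} {b : List Δ} {p' : σ × List Δ}
      (hp : p ∈ bufferedConfigs out) (hq : (s, d :: b) ∈ bufferedConfigs out)
      (hp' : p' ∈ bufferedConfigs out) :
      IsPreimageRule ⟨.seg p [.terminal d] p',
        [.nonterminal (.seg p [] (s, d :: b)), .nonterminal (.seg (s, b) [] p')]⟩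
  | read (s : σ) (a : α) {p : σ × List Δ} (hp : p ∈ bufferedConfigs out) :
      IsPreimageRule
        ⟨.seg (s, []) [] p, [.terminal a, .nonterminal (.seg (M.step s a, out s a) [] p)]⟩
  | nil {p : σ × List Δ} (hp : p ∈ bufferedConfigs out) : IsPreimageRule ⟨.seg p [] p, []⟩

lemma finite_setOf_isPreimageRule [Finite α] [Finite σ] :
    {r | IsPreimageRule M out g r}.Finite := by
  have hC : (bufferedConfigs out).Finite := finite_bufferedConfigs
  have hcons : ∀ β : Type, Function.Injective (Function.uncurry (@List.cons β)) :=
    fun _ => Function.Injective2.uncurry fun _ _ _ _ => List.cons.inj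
  have hsuffix : {γ | ∃ r ∈ g.rules, γ <:+ r.output}.Finite :=
    (g.rules.finite_toSet.biUnion fun r _ => List.finite_toSet r.output.tails).subset
      fun γ ⟨r, hr, hγ⟩ => Set.mem_biUnion hr ((List.mem_tails _ _).mpr hγ)
  have hsplit : {xβ : Symbol Δ g.NT × List (Symbol Δ g.NT) |
      ∃ r ∈ g.rules, xβ.1 :: xβ.2 <:+ r.output}.Finite :=
    hsuffix.preimage (f := Function.uncurry List.cons) (hcons _).injOn
  have hconsume : {sdb : σ × Δ × List Δ |
      (sdb.1, sdb.2.1 :: sdb.2.2) ∈ bufferedConfigs out}.Finite :=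
    hC.preimage (f := Prod.map id (Function.uncurry List.cons))
      (Function.injective_id.prodMap (hcons Δ)).injOn
  refine (((((((hC.prod (Set.toFinite M.accept)).image fun ⟨q, s⟩ =>
      (⟨.start, [.nonterminal (.seg (M.start, []) [.nonterminal g.initial] q),
        .nonterminal (.seg q [] (s, []))]⟩ : ContextFreeRule α (PreimageItem σ Δ g.NT))).union
    ((g.rules.finite_toSet.prod (hC.prod hC)).image fun ⟨r, p, p'⟩ =>
      ⟨.seg p [.nonterminal r.input] p', [.nonterminal (.seg p r.output p')]⟩)).union
    ((hsplit.prod (hC.prod (hC.prod hC))).image fun ⟨⟨x, β⟩, p, q, p'⟩ =>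
      ⟨.seg p (x :: β) p', [.nonterminal (.seg p [x] q), .nonterminal (.seg q β p')]⟩)).union
    ((hC.prod (hconsume.prod hC)).image fun ⟨p, ⟨s, d, b⟩, p'⟩ =>
      ⟨.seg p [.terminal d] p',
        [.nonterminal (.seg p [] (s, d :: b)), .nonterminal (.seg (s, b) [] p')]⟩)).union
    (((Set.finite_univ (α := σ × α)).prod hC).image fun ⟨⟨s, a⟩, p⟩ =>
      ⟨.seg (s, []) [] p, [.terminal a, .nonterminal (.seg (M.step s a, out s a) [] p)]⟩)).union
    (hC.image fun p => ⟨.seg p [] p, []⟩)).subset ?_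
  rintro _ (⟨hq, hs⟩ | ⟨hr, hp, hp'⟩ | ⟨hr, hβ, hp, hq, hp'⟩ | ⟨hp, hq, hp'⟩ | ⟨s, a, hp⟩ | ⟨hp⟩)
  · exact .inl (.inl (.inl (.inl (.inl ⟨(_, _), ⟨hq, hs⟩, rfl⟩))))
  · exact .inl (.inl (.inl (.inl (.inr ⟨(_, _, _), ⟨hr, hp, hp'⟩, rfl⟩))))
  · exact .inl (.inl (.inl (.inr ⟨((_, _), _, _, _), ⟨⟨_, hr, hβ⟩, hp, hq, hp'⟩, rfl⟩)))
  · exact .inl (.inl (.inr ⟨(_, (_, _, _), _), ⟨hp, hq, hp'⟩, rfl⟩))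
  · exact .inl (.inr ⟨((s, a), _), ⟨trivial, hp⟩, rfl⟩)
  · exact .inr ⟨_, hp, rfl⟩

def PreimageItem.Denotes : PreimageItem σ Δ g.NT → List α → Prop
  | .start, u => ∃ v ∈ g.language, ∃ s ∈ M.accept, M.OutputPath out (M.start, []) v u (s, [])
  | .seg p β p', u => ∃ v, g.Derives β (v.map .terminal) ∧ M.OutputPath out p v u p'

variable {M out g}

lemma PreimageItem.denotes_seg_nil {p p' : σ × List Δ} {u : List α} :
    Denotes M out g (.seg p [] p') u ↔ M.OutputPath out p [] u p' := by
  refine ⟨fun ⟨v, hv, h⟩ => ?_, fun h => ⟨[], .refl _, h⟩⟩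
  rwa [List.map_eq_nil_iff.mp (eq_nil_of_derives_nil hv)] at h

lemma IsPreimageRule.sound {r : ContextFreeRule α (PreimageItem σ Δ g.NT)}
    (hr : IsPreimageRule M out g r) {u : List α}
    (h : Realizes (PreimageItem.Denotes M out g) r.output u) :
    PreimageItem.Denotes M out g r.input u := by
  cases hr with
  | start _ hs =>
    obtain ⟨u₁, u₂, rfl, ⟨v, hv, h₁⟩, h₂⟩ := realizes_nonterminal_pair.mp h
    rw [PreimageItem.denotes_seg_nil] at h₂
    exact ⟨v, hv, _, hs, by simpa using h₁.append h₂⟩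
  | @expand r hr =>
    obtain ⟨v, hv, hpath⟩ := realizes_nonterminal_singleton.mp h
    exact ⟨v, Produces.trans_derives ⟨r, hr, .input_output⟩ hv, hpath⟩
  | split =>
    obtain ⟨u₁, u₂, rfl, ⟨v₁, hv₁, h₁⟩, ⟨v₂, hv₂, h₂⟩⟩ := realizes_nonterminal_pair.mp h
    exact ⟨v₁ ++ v₂, by simpa using hv₁.append hv₂, h₁.append h₂⟩
  | @consume p s d b =>
    obtain ⟨u₁, u₂, rfl, h₁, h₂⟩ := realizes_nonterminal_pair.mp h
    rw [PreimageItem.denotes_seg_nil] at h₁ h₂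
    exact ⟨[d], .refl _, h₁.append (.consume s d b h₂)⟩
  | read s a =>
    rcases h with _ | ⟨_, h⟩
    rw [realizes_nonterminal_singleton, PreimageItem.denotes_seg_nil] at h
    exact PreimageItem.denotes_seg_nil.mpr (.read s a h)
  | nil =>
    cases h
    exact PreimageItem.denotes_seg_nil.mpr (.nil _)

variable (M out g) [Finite α] [Finite σ]

noncomputable def preimageGrammar : ContextFreeGrammar α where
  NT := PreimageItem σ Δ g.NT
  initial := .start
  rules := (finite_setOf_isPreimageRule M out g).toFinset

variable {M out g}

lemma mem_preimageGrammar_rules {r : ContextFreeRule α (PreimageItem σ Δ g.NT)} :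
    r ∈ (M.preimageGrammar out g).rules ↔ IsPreimageRule M out g r :=
  Set.Finite.mem_toFinset _

theorem preimageGrammar_language_le :
    (M.preimageGrammar out g).language ≤
      {u | u ∈ M.accepts ∧ M.outputFrom out M.start u ∈ g.language} := by
  intro u hu
  obtain ⟨v, hv, s, hs, h⟩ := initial_of_mem_language (P := PreimageItem.Denotes M out g)
    (fun _ hr _ h => (mem_preimageGrammar_rules.mp hr).sound h) hu
  obtain ⟨rfl, rfl⟩ := outputPath_iff.mp h
  exact ⟨hs, hv⟩

lemma IsPreimageRule.produces {r : ContextFreeRule α (PreimageItem σ Δ g.NT)}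
    (hr : IsPreimageRule M out g r) :
    (M.preimageGrammar out g).Produces [.nonterminal r.input] r.output :=
  ⟨r, mem_preimageGrammar_rules.mpr hr, .input_output⟩

lemma derives_seg_nil {p q : σ × List Δ} {u : List α} (h : M.OutputPath out p [] u q)
    (hq : q ∈ bufferedConfigs out) :
    (M.preimageGrammar out g).Derives [.nonterminal (.seg p [] q)] (u.map .terminal) := by
  generalize hv : ([] : List Δ) = v at h
  induction h with
  | nil => exact (IsPreimageRule.nil hq).produces.single
  | read s a _ ih =>
    exact (IsPreimageRule.read s a hq).produces.trans_derives
      ((ih hq hv).append_left [.terminal a])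
  | consume => cases hv

lemma derives_seg_terminal {p q : σ × List Δ} {d : Δ} {u : List α}
    (h : M.OutputPath out p [d] u q) (hp : p ∈ bufferedConfigs out)
    (hq : q ∈ bufferedConfigs out) :
    (M.preimageGrammar out g).Derives [.nonterminal (.seg p [.terminal d] q)]
      (u.map .terminal) := by
  obtain ⟨s, b, u₁, u₂, rfl, h₁, h₂⟩ := h.exists_of_cons
  have hsb := h₁.mem_bufferedConfigs hp
  refine (IsPreimageRule.consume hp hsb hq).produces.trans_derives ?_
  rw [List.map_append]
  exact (derives_seg_nil h₁ hsb).append (derives_seg_nil h₂ hq)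

variable (M out g) in
inductive Lifts : σ × List Δ → List (Symbol Δ g.NT) → List α → σ × List Δ → Prop
  | nil {p : σ × List Δ} (hp : p ∈ bufferedConfigs out) : Lifts p [] [] p
  | cons {p q p' : σ × List Δ} {x : Symbol Δ g.NT} {w : List (Symbol Δ g.NT)} {u₁ u₂ : List α}
      (hp : p ∈ bufferedConfigs out) (hq : q ∈ bufferedConfigs out)
      (hx : (M.preimageGrammar out g).Derives [.nonterminal (.seg p [x] q)] (u₁.map .terminal))
      (h : Lifts q w u₂ p') : Lifts p (x :: w) (u₁ ++ u₂) p'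

namespace Lifts

lemma mem_left {p p' : σ × List Δ} {w : List (Symbol Δ g.NT)} {u : List α}
    (h : M.Lifts out g p w u p') : p ∈ bufferedConfigs out := by
  cases h with
  | nil hp => exact hp
  | cons hp => exact hp

lemma mem_right {p p' : σ × List Δ} {w : List (Symbol Δ g.NT)} {u : List α}
    (h : M.Lifts out g p w u p') : p' ∈ bufferedConfigs out := by
  induction h with
  | nil hp => exact hp
  | cons _ _ _ _ ih => exact ih

lemma singleton_iff {p q : σ × List Δ} {x : Symbol Δ g.NT} {u : List α} :
    M.Lifts out g p [x] u q ↔ p ∈ bufferedConfigs out ∧ q ∈ bufferedConfigs out ∧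
      (M.preimageGrammar out g).Derives [.nonterminal (.seg p [x] q)] (u.map .terminal) := by
  refine ⟨fun h => ?_, fun ⟨hp, hq, hx⟩ => by simpa using cons hp hq hx (nil hq)⟩
  rcases h with _ | ⟨hp, hq, hx, ⟨⟩⟩
  simpa using ⟨hp, hq, hx⟩

lemma append {p q p' : σ × List Δ} {w₁ w₂ : List (Symbol Δ g.NT)} {u₁ u₂ : List α}
    (h₁ : M.Lifts out g p w₁ u₁ q) (h₂ : M.Lifts out g q w₂ u₂ p') :
    M.Lifts out g p (w₁ ++ w₂) (u₁ ++ u₂) p' := by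
  induction h₁ with
  | nil => exact h₂
  | cons hp hq hx _ ih => simpa using cons hp hq hx (ih h₂)

lemma exists_of_append {p p' : σ × List Δ} {w₁ w₂ : List (Symbol Δ g.NT)} {u : List α}
    (h : M.Lifts out g p (w₁ ++ w₂) u p') :
    ∃ q u₁ u₂, u = u₁ ++ u₂ ∧ M.Lifts out g p w₁ u₁ q ∧ M.Lifts out g q w₂ u₂ p' := by
  induction w₁ generalizing p u with
  | nil => exact ⟨p, [], u, rfl, nil h.mem_left, h⟩
  | cons x w₁ ih =>
    rcases h with _ | ⟨hp, hq, hx, h⟩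
    obtain ⟨q', v₁, v₂, rfl, h₁, h₂⟩ := ih h
    exact ⟨q', _ ++ v₁, v₂, by simp, cons hp hq hx h₁, h₂⟩

lemma derives_seg {p p' : σ × List Δ} {β : List (Symbol Δ g.NT)} {u : List α}
    (h : M.Lifts out g p β u p') (hβ : ∃ r ∈ g.rules, β <:+ r.output) :
    (M.preimageGrammar out g).Derives [.nonterminal (.seg p β p')] (u.map .terminal) := by
  induction h with
  | nil hp => exact (IsPreimageRule.nil hp).produces.single
  | cons hp hq hx h ih =>
    obtain ⟨r, hr, hβ⟩ := hβ
    refine (IsPreimageRule.split hr hβ hp hq h.mem_right).produces.trans_derives ?_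
    rw [List.map_append]
    exact hx.append (ih ⟨r, hr, (List.suffix_cons _ _).trans hβ⟩)

end Lifts

lemma exists_lifts_map_terminal {p p' : σ × List Δ} {v : List Δ} {u : List α}
    (h : M.OutputPath out p v u p') (hp : p ∈ bufferedConfigs out) :
    ∃ q u₁ u₂, u = u₁ ++ u₂ ∧ M.Lifts out g p (v.map .terminal) u₁ q ∧
      M.OutputPath out q [] u₂ p' := by
  induction v generalizing p u with
  | nil => exact ⟨p, [], u, rfl, .nil hp, h⟩
  | cons d v ih =>
    obtain ⟨q₁, u₁, u₂, rfl, h₁, h₂⟩ := h.exists_of_append (v₁ := [d])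
    have hq₁ := h₁.mem_bufferedConfigs hp
    obtain ⟨q, u₂, u₃, rfl, hl, hrest⟩ := ih h₂ hq₁
    exact ⟨q, u₁ ++ u₂, u₃, by simp, .cons hp hq₁ (derives_seg_terminal h₁ hp hq₁) hl, hrest⟩

lemma Lifts.of_produces {w w' : List (Symbol Δ g.NT)} (hw : g.Produces w w')
    {p p' : σ × List Δ} {u : List α} (h : M.Lifts out g p w' u p') : M.Lifts out g p w u p' := by
  obtain ⟨r, hr, hrw⟩ := hw
  obtain ⟨x, y, rfl, rfl⟩ := hrw.exists_parts
  obtain ⟨q₁, u₁, u₂₃, rfl, hx, h₂₃⟩ := exists_of_append (by simpa using h)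
  obtain ⟨q₂, u₂, u₃, rfl, hmid, hy⟩ := h₂₃.exists_of_append
  have hA : M.Lifts out g q₁ [.nonterminal r.input] u₂ q₂ :=
    singleton_iff.mpr ⟨hmid.mem_left, hmid.mem_right,
      (IsPreimageRule.expand hr hmid.mem_left hmid.mem_right).produces.trans_derives
        (hmid.derives_seg ⟨r, hr, List.suffix_refl _⟩)⟩
  simpa using hx.append (hA.append hy)

lemma Lifts.of_derives {w w' : List (Symbol Δ g.NT)} (hw : g.Derives w w')
    {p p' : σ × List Δ} {u : List α} (h : M.Lifts out g p w' u p') : M.Lifts out g p w u p' := by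
  induction hw with
  | refl => exact h
  | tail _ hlast ih => exact ih (h.of_produces hlast)

theorem preimageGrammar_language :
    (M.preimageGrammar out g).language =
      {u | u ∈ M.accepts ∧ M.outputFrom out M.start u ∈ g.language} := by
  refine le_antisymm preimageGrammar_language_le ?_
  rintro u ⟨hu, hv⟩
  have hstart : (M.start, []) ∈ bufferedConfigs out := Or.inl rfl
  obtain ⟨q, u₁, u₂, rfl, hl, hrest⟩ :=
    exists_lifts_map_terminal (g := g) (outputPath_outputFrom M.start u) hstart
  obtain ⟨-, hq, hder⟩ := Lifts.singleton_iff.mp (hl.of_derives hv)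
  refine (IsPreimageRule.start hq hu).produces.trans_derives ?_
  rw [List.map_append]
  exact hder.append (derives_seg_nil hrest (Or.inl rfl))

end Grammar

end DFA

theorem Language.IsContextFree.dfa_outputFrom_preimage {α : Type*} {σ Δ : Type}
    [Finite α] [Finite σ] (M : DFA α σ) (out : σ → α → List Δ) {L : Language Δ}
    (hL : L.IsContextFree) :
    Language.IsContextFree {u | u ∈ M.accepts ∧ M.outputFrom out M.start u ∈ L} := by
  obtain ⟨g, rfl⟩ := hL
  exact ⟨M.preimageGrammar out g, DFA.preimageGrammar_language⟩

def MonoidHom.wordProblem {α M : Type*} [Monoid M] (φ : FreeMonoid α →* M) : Language α :=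
  {w | φ (FreeMonoid.ofList w) = 1}

namespace Subgroup

variable {G : Type} [Group G] (H : Subgroup G) {α : Type*} {Δ : Type}

lemma out_inv_mul_mul_out_smul_mem (g : G) (c : G ⧸ H) : c.out⁻¹ * g * (g⁻¹ • c).out ∈ H := by
  have hmk : ((g⁻¹ * c.out : G) : G ⧸ H) = ((g⁻¹ • c).out : G) := by
    rw [QuotientGroup.out_eq', ← smul_eq_mul, MulAction.Quotient.mk_smul_out]
  simpa [mul_assoc] using QuotientGroup.eq.mp hmk

def cosetDFA (φ : FreeMonoid α →* G) : DFA α (G ⧸ H) where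
  step c a := (φ (.of a))⁻¹ • c
  start := ((1 : G) : G ⧸ H)
  accept := {((1 : G) : G ⧸ H)}

noncomputable def cosetOutput (φ : FreeMonoid α →* G) (ν : H → FreeMonoid Δ) (c : G ⧸ H)
    (a : α) : List Δ :=
  FreeMonoid.toList
    (ν ⟨c.out⁻¹ * φ (.of a) * ((φ (.of a))⁻¹ • c).out, H.out_inv_mul_mul_out_smul_mem _ c⟩)

variable {H} {φ : FreeMonoid α →* G} {μ : FreeMonoid Δ →* H} {ν : H → FreeMonoid Δ}

lemma map_mul_out_evalFrom (hν : Function.RightInverse ν μ) (c : G ⧸ H) (u : List α) :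
    φ (FreeMonoid.ofList u) * ((H.cosetDFA φ).evalFrom c u).out =
      c.out * μ (FreeMonoid.ofList ((H.cosetDFA φ).outputFrom (H.cosetOutput φ ν) c u)) := by
  induction u generalizing c with
  | nil => simp [DFA.evalFrom_nil]
  | cons a u ih =>
    rw [DFA.evalFrom_cons, DFA.outputFrom_cons, FreeMonoid.ofList_cons, FreeMonoid.ofList_append,
      map_mul, map_mul, mul_assoc, ih, cosetOutput, FreeMonoid.ofList_toList, hν]
    simp only [cosetDFA, Subgroup.coe_mul]
    group

theorem wordProblem_eq_cosetDFA (hν : Function.RightInverse ν μ) :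
    φ.wordProblem = {u | u ∈ (H.cosetDFA φ).accepts ∧
      (H.cosetDFA φ).outputFrom (H.cosetOutput φ ν) (H.cosetDFA φ).start u ∈ μ.wordProblem} := by
  ext u
  have key := map_mul_out_evalFrom (φ := φ) hν (H.cosetDFA φ).start u
  set s := (H.cosetDFA φ).evalFrom (H.cosetDFA φ).start u
  set h := μ (FreeMonoid.ofList ((H.cosetDFA φ).outputFrom (H.cosetOutput φ ν)
    (H.cosetDFA φ).start u))
  change φ (FreeMonoid.ofList u) = 1 ↔ s = (H.cosetDFA φ).start ∧ h = 1
  constructor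
  · intro hu
    rw [hu, one_mul] at key
    have hs : s = (H.cosetDFA φ).start := by
      rw [← QuotientGroup.out_eq' s, key, QuotientGroup.mk_mul_of_mem _ h.2,
        QuotientGroup.out_eq']
    rw [hs] at key
    exact ⟨hs, OneMemClass.coe_eq_one.mp (mul_eq_left.mp key.symm)⟩
  · rintro ⟨hs, hh⟩
    rw [hs, hh, Subgroup.coe_one, mul_one] at key
    exact mul_eq_right.mp key

end Subgroup

theorem wordProblem_contextFree_of_finiteIndex_subgroup_general
    {α Δ : Type} [Fintype α] {G : Type} [Group G] (H : Subgroup G)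
    (hidx : H.FiniteIndex)
    (μ : FreeMonoid Δ →* H) (hμ : Function.Surjective μ)
    (hH : Language.IsContextFree {w : List Δ | μ (FreeMonoid.ofList w) = 1})
    (σ : FreeMonoid α →* G) :
    Language.IsContextFree {w : List α | σ (FreeMonoid.ofList w) = 1} := by
  have := hidx
  obtain ⟨ν, hν⟩ := hμ.hasRightInverse
  change σ.wordProblem.IsContextFree
  rw [Subgroup.wordProblem_eq_cosetDFA hν]
  exact hH.dfa_outputFrom_preimage _ _

/-- Theorem 6.4 (for context-free languages): the class of groups with context-free
word problem is closed under finite extensions.  If `H` is a subgroup of finite index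
in `G` whose word problem is context-free, then the word problem of `G` is
context-free. -/
theorem wordProblem_contextFree_of_finiteIndex_subgroup
    {α Δ : Type} [Fintype α] [Fintype Δ] {G : Type} [Group G] (H : Subgroup G)
    (hidx : H.FiniteIndex)
    (μ : FreeMonoid Δ →* H) (hμ : Function.Surjective μ)
    (hH : Language.IsContextFree {w : List Δ | μ (FreeMonoid.ofList w) = 1})
    (σ : FreeMonoid α →* G) (hσ : Function.Surjective σ) :
    Language.IsContextFree {w : List α | σ (FreeMonoid.ofList w) = 1} :=
  wordProblem_contextFree_of_finiteIndex_subgroup_general H hidx μ hμ hH σ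
end

section
/- If L is a context-free language over a finite alphabet Σ and R is a regular language over Σ, then L ∩ R is context-free. -/
/-!
Bar-Hillel's triple construction. The new grammar has a nonterminal `(p, X, q)` for every
nonterminal `X` of `g` and states `p, q` of the automaton `M`, meant to derive those words derived
from `X` that take `M` from `p` to `q`. Every rule `X → x₁ ⋯ xₙ` of `g` is copied once for each
choice of states running through its right-hand side, consistently with `M` across terminals,
and a fresh start symbol picks an accepting final state. Derivations of the two grammars then
correspond step by step, with the states forming a run of `M` across each sentential form.
-/

variable {T : Type*} {σ N : Type}

namespace ContextFreeRule

lemma Rewrites.eq_output_of_singleton {r : ContextFreeRule T N} {X : N}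
    {v : List (Symbol T N)} (h : r.Rewrites [.nonterminal X] v) : r.input = X ∧ v = r.output := by
  cases h with
  | head => simp
  | cons _ h => cases h

end ContextFreeRule

namespace ContextFreeGrammar

/-- `Annotates M p u v q`: `v` is `u` with each nonterminal `X` replaced by a triple `(s, X, s')`,
along a sequence of states from `p` to `q` that follows `M` across terminals and may jump
arbitrarily across nonterminals. -/
inductive Annotates (M : DFA T σ) :
    σ → List (Symbol T N) → List (Symbol T (Option (σ × N × σ))) → σ → Prop
  | nil (p : σ) : Annotates M p [] [] p
  | terminal {p q : σ} (a : T) {u v} (h : Annotates M (M.step p a) u v q) :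
      Annotates M p (.terminal a :: u) (.terminal a :: v) q
  | nonterminal {p q : σ} (m : σ) (X : N) {u v} (h : Annotates M m u v q) :
      Annotates M p (.nonterminal X :: u) (.nonterminal (some (p, X, m)) :: v) q

namespace Annotates

variable {M : DFA T σ} {p m q : σ} {u u₁ u₂ : List (Symbol T N)}
  {v v₁ v₂ : List (Symbol T (Option (σ × N × σ)))}

lemma eq_of_nil_left (h : Annotates M p [] v q) : v = [] ∧ q = p := by
  cases h; exact ⟨rfl, rfl⟩

lemma eq_of_nil_right (h : Annotates M p u [] q) : u = [] ∧ q = p := by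
  cases h; exact ⟨rfl, rfl⟩

lemma singleton_nonterminal (p q : σ) (X : N) :
    Annotates M p [.nonterminal X] [.nonterminal (some (p, X, q))] q :=
  .nonterminal q X (.nil q)

lemma singleton_nonterminal_left_iff {X : N} :
    Annotates M p [.nonterminal X] v q ↔ v = [.nonterminal (some (p, X, q))] := by
  refine ⟨fun h => ?_, fun h => h ▸ singleton_nonterminal p q X⟩
  cases h with
  | nonterminal m X h => obtain ⟨rfl, rfl⟩ := h.eq_of_nil_left; rfl

lemma append (h₁ : Annotates M p u₁ v₁ m) (h₂ : Annotates M m u₂ v₂ q) :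
    Annotates M p (u₁ ++ u₂) (v₁ ++ v₂) q := by
  induction h₁ with
  | nil => exact h₂
  | terminal a _ ih => exact .terminal a (ih h₂)
  | nonterminal m X _ ih => exact .nonterminal m X (ih h₂)

lemma exists_split_left (h : Annotates M p (u₁ ++ u₂) v q) :
    ∃ v₁ v₂ m, v = v₁ ++ v₂ ∧ Annotates M p u₁ v₁ m ∧ Annotates M m u₂ v₂ q := by
  induction u₁ generalizing p v with
  | nil => exact ⟨[], v, p, rfl, .nil p, h⟩
  | cons x u₁ ih =>
    cases h with
    | terminal a h =>
      obtain ⟨v₁, v₂, m, rfl, h₁, h₂⟩ := ih h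
      exact ⟨_, v₂, m, rfl, .terminal a h₁, h₂⟩
    | nonterminal m' X h =>
      obtain ⟨v₁, v₂, m, rfl, h₁, h₂⟩ := ih h
      exact ⟨_, v₂, m, rfl, .nonterminal m' X h₁, h₂⟩

lemma exists_split_right (h : Annotates M p u (v₁ ++ v₂) q) :
    ∃ u₁ u₂ m, u = u₁ ++ u₂ ∧ Annotates M p u₁ v₁ m ∧ Annotates M m u₂ v₂ q := by
  induction v₁ generalizing p u with
  | nil => exact ⟨[], u, p, rfl, .nil p, h⟩
  | cons x v₁ ih =>
    cases h with
    | terminal a h =>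
      obtain ⟨u₁, u₂, m, rfl, h₁, h₂⟩ := ih h
      exact ⟨_, u₂, m, rfl, .terminal a h₁, h₂⟩
    | nonterminal m' X h =>
      obtain ⟨u₁, u₂, m, rfl, h₁, h₂⟩ := ih h
      exact ⟨_, u₂, m, rfl, .nonterminal m' X h₁, h₂⟩

lemma map_terminal (M : DFA T σ) (p : σ) (w : List T) :
    Annotates M p (w.map .terminal : List (Symbol T N)) (w.map .terminal) (M.evalFrom p w) := by
  induction w generalizing p with
  | nil => exact .nil p
  | cons a w ih => exact .terminal a (ih _)

lemma eq_of_map_terminal_right {w : List T} (h : Annotates M p u (w.map .terminal) q) :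
    u = w.map .terminal ∧ M.evalFrom p w = q := by
  induction w generalizing p u with
  | nil => obtain ⟨rfl, rfl⟩ := h.eq_of_nil_right; exact ⟨rfl, rfl⟩
  | cons a w ih =>
    cases h with
    | terminal a h => obtain ⟨rfl, rfl⟩ := ih h; exact ⟨rfl, rfl⟩

lemma finite_setOf [Finite σ] (M : DFA T σ) (p : σ) (u : List (Symbol T N)) :
    {x : List (Symbol T (Option (σ × N × σ))) × σ | Annotates M p u x.1 x.2}.Finite := by
  induction u generalizing p with
  | nil =>
    refine (Set.finite_singleton ([], p)).subset ?_
    rintro ⟨v, q⟩ h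
    obtain ⟨rfl, rfl⟩ := h.eq_of_nil_left
    rfl
  | cons x u ih =>
    cases x with
    | terminal a =>
      refine ((ih (M.step p a)).image fun x => (.terminal a :: x.1, x.2)).subset ?_
      rintro ⟨v, q⟩ h
      cases h with
      | terminal _ h => exact ⟨(_, q), h, rfl⟩
    | nonterminal X =>
      refine (Set.finite_iUnion fun m =>
        (ih m).image fun x => (.nonterminal (some (p, X, m)) :: x.1, x.2)).subset ?_
      rintro ⟨v, q⟩ h
      cases h with
      | nonterminal m _ h => exact Set.mem_iUnion.2 ⟨m, (_, q), h, rfl⟩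

end Annotates

variable (g : ContextFreeGrammar T) (M : DFA T σ)

def IsInterDFARule : ContextFreeRule T (Option (σ × g.NT × σ)) → Prop
  | ⟨none, o⟩ => ∃ q ∈ M.accept, o = [.nonterminal (some (M.start, g.initial, q))]
  | ⟨some (p, X, q), o⟩ => ∃ r ∈ g.rules, r.input = X ∧ Annotates M p r.output o q

lemma finite_setOf_isInterDFARule [Finite σ] : {r | g.IsInterDFARule M r}.Finite := by
  have hstart := (Set.toFinite M.accept).image
    fun q => (⟨none, [.nonterminal (some (M.start, g.initial, q))]⟩ :
      ContextFreeRule T (Option (σ × g.NT × σ)))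
  have hlift := g.rules.finite_toSet.biUnion fun r _ => Set.finite_iUnion fun p =>
    (Annotates.finite_setOf M p r.output).image
      fun x => (⟨some (p, r.input, x.2), x.1⟩ : ContextFreeRule T (Option (σ × g.NT × σ)))
  refine (hstart.union hlift).subset ?_
  rintro ⟨_ | ⟨p, X, q⟩, o⟩ h
  · obtain ⟨q, hq, rfl⟩ := h
    exact .inl ⟨q, hq, rfl⟩
  · obtain ⟨r, hr, rfl, ha⟩ := h
    exact .inr (Set.mem_biUnion hr (Set.mem_iUnion.2 ⟨p, (o, q), ha, rfl⟩))

noncomputable def interDFA [Finite σ] : ContextFreeGrammar T where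
  NT := Option (σ × g.NT × σ)
  initial := none
  rules := (g.finite_setOf_isInterDFARule M).toFinset

variable {g M}

lemma mem_interDFA_rules [Finite σ] {r : ContextFreeRule T (Option (σ × g.NT × σ))} :
    r ∈ (g.interDFA M).rules ↔ g.IsInterDFARule M r :=
  Set.Finite.mem_toFinset _

namespace Annotates

variable [Finite σ] {p q : σ} {u u' : List (Symbol T g.NT)}
  {v v' : List (Symbol T (Option (σ × g.NT × σ)))}

lemma exists_produces_of_interDFA_produces (hv : Annotates M p u v q)
    (h : (g.interDFA M).Produces v v') : ∃ u', Annotates M p u' v' q ∧ g.Produces u u' := by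
  obtain ⟨⟨input, o⟩, hr, hrw⟩ := h
  obtain ⟨s, t, rfl, rfl⟩ := hrw.exists_parts
  obtain ⟨u₁₂, u₃, m₂, rfl, h₁₂, h₃⟩ := hv.exists_split_right
  obtain ⟨u₁, u₂, m₁, rfl, h₁, h₂⟩ := h₁₂.exists_split_right
  cases h₂ with
  | nonterminal m X h =>
    obtain ⟨rfl, rfl⟩ := h.eq_of_nil_right
    obtain ⟨r, hr', rfl, ho⟩ := mem_interDFA_rules.1 hr
    exact ⟨u₁ ++ r.output ++ u₃, (h₁.append ho).append h₃,
      r, hr', ContextFreeRule.rewrites_of_exists_parts r u₁ u₃⟩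

lemma exists_interDFA_produces_of_produces (hu' : Annotates M p u' v' q)
    (h : g.Produces u u') : ∃ v, Annotates M p u v q ∧ (g.interDFA M).Produces v v' := by
  obtain ⟨r, hr, hrw⟩ := h
  obtain ⟨s, t, rfl, rfl⟩ := hrw.exists_parts
  obtain ⟨v₁₂, v₃, m₂, rfl, h₁₂, h₃⟩ := hu'.exists_split_left
  obtain ⟨v₁, v₂, m₁, rfl, h₁, h₂⟩ := h₁₂.exists_split_left
  exact ⟨v₁ ++ [.nonterminal (some (m₁, r.input, m₂))] ++ v₃,
    (h₁.append (singleton_nonterminal _ _ _)).append h₃,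
    ⟨some (m₁, r.input, m₂), v₂⟩, mem_interDFA_rules.2 ⟨r, hr, rfl, h₂⟩,
    ContextFreeRule.rewrites_of_exists_parts _ v₁ v₃⟩

lemma exists_derives_of_interDFA_derives (hv : Annotates M p u v q)
    (h : (g.interDFA M).Derives v v') : ∃ u', Annotates M p u' v' q ∧ g.Derives u u' := by
  induction h with
  | refl => exact ⟨u, hv, .refl u⟩
  | tail _ hp ih =>
    obtain ⟨u₁, h₁, hd⟩ := ih
    obtain ⟨u', h', hp'⟩ := h₁.exists_produces_of_interDFA_produces hp
    exact ⟨u', h', hd.trans_produces hp'⟩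

lemma exists_interDFA_derives_of_derives (hu' : Annotates M p u' v' q)
    (h : g.Derives u u') : ∃ v, Annotates M p u v q ∧ (g.interDFA M).Derives v v' := by
  induction h using Relation.ReflTransGen.head_induction_on with
  | refl => exact ⟨v', hu', Relation.ReflTransGen.refl⟩
  | head hp _ ih =>
    obtain ⟨v₁, h₁, hd⟩ := ih
    obtain ⟨v, h, hp'⟩ := h₁.exists_interDFA_produces_of_produces hp
    exact ⟨v, h, hp'.trans_derives hd⟩

end Annotates

variable (g M) in
theorem language_interDFA [Finite σ] : (g.interDFA M).language = g.language ⊓ M.accepts := by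
  ext w
  rw [Language.mem_inf, mem_language_iff, mem_language_iff, DFA.mem_accepts]
  constructor
  · intro h
    obtain ⟨v, ⟨⟨input, o⟩, hr, hrw⟩, hv⟩ := h.eq_or_head.resolve_left (by cases w <;> simp)
    obtain ⟨rfl, rfl⟩ := hrw.eq_output_of_singleton
    obtain ⟨q, hq, rfl⟩ := mem_interDFA_rules.1 hr
    obtain ⟨u, hu, hd⟩ :=
      (Annotates.singleton_nonterminal M.start q g.initial).exists_derives_of_interDFA_derives hv
    obtain ⟨rfl, rfl⟩ := hu.eq_of_map_terminal_right
    exact ⟨hd, hq⟩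
  · rintro ⟨hg, hM⟩
    obtain ⟨v, hv, hd⟩ := (Annotates.map_terminal M M.start w).exists_interDFA_derives_of_derives hg
    rw [Annotates.singleton_nonterminal_left_iff] at hv
    subst hv
    exact Produces.trans_derives
      ⟨⟨none, _⟩, mem_interDFA_rules.2 ⟨_, hM, rfl⟩, ContextFreeRule.Rewrites.input_output⟩ hd

end ContextFreeGrammar

theorem contextFree_inter_regular_general {α : Type} (L R : Language α)
    (hL : L.IsContextFree) (hR : R.IsRegular) : Language.IsContextFree (L ⊓ R) := by
  obtain ⟨g, rfl⟩ := hL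
  obtain ⟨σ, _, M, rfl⟩ := hR
  exact ⟨g.interDFA M, g.language_interDFA M⟩

/-- Corollary 6.3 (for context-free languages): the intersection of a context-free
language with a rational (regular) language is context-free. -/
theorem contextFree_inter_regular {α : Type} [Fintype α] (L R : Language α)
    (hL : L.IsContextFree) (hR : R.IsRegular) : Language.IsContextFree (L ⊓ R) :=
  contextFree_inter_regular_general L R hL hR
end

section
/- Let Γ, Σ, Δ be finite alphabets, let f : Γ* → Σ* and g : Γ* → Δ* be monoid homomorphisms of free monoids, let R ⊆ Γ* be a regular language, and let L ⊆ Σ* be a context-free language. Then the language {g(r) | r ∈ R and f(r) ∈ L} ⊆ Δ* is context-free. -/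
/-!
A rational transduction is realized by a finite transducer that reads at most one letter per
move: its states pair a state of the automaton for `R` with the suffix of some `f γ` that is
still owed; a silent move guesses the next letter `γ`, emits `g γ` and starts owing `f γ`, and
the owed letters are then read one at a time.

The image of a context-free language under such a transducer is context-free by the triple
construction: the nonterminal `(p, X, q)` generates the outputs of the runs from `p` to `q` on
the words derived from `X`, and the silent moves are generated by nonterminals `(p, q)` placed
around every input letter. For soundness, each nonterminal is read as the language it should
generate: every right-hand side then denotes a sublanguage of its left-hand side, and this
inclusion survives derivations.
-/

namespace ContextFreeGrammar

variable {T N : Type*}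

def symbolLanguage (sem : N → Language T) : Symbol T N → Language T
  | .terminal t => {[t]}
  | .nonterminal n => sem n

theorem prod_map_symbolLanguage_terminal (sem : N → Language T) (w : List T) :
    ((w.map Symbol.terminal).map (symbolLanguage sem)).prod = {w} := by
  induction w with
  | nil => rfl
  | cons t w ih =>
    ext x
    simp only [List.map_cons, List.prod_cons, ih, Language.mem_mul, symbolLanguage]
    exact ⟨fun ⟨_, rfl, _, rfl, h⟩ => h.symm, fun h => ⟨_, rfl, _, rfl, h.symm⟩⟩

variable {g : ContextFreeGrammar T}

theorem Derives.prod_map_symbolLanguage_le {sem : g.NT → Language T}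
    (hsem : ∀ r ∈ g.rules, (r.output.map (symbolLanguage sem)).prod ≤ sem r.input)
    {u v : List (Symbol T g.NT)} (h : g.Derives u v) :
    (v.map (symbolLanguage sem)).prod ≤ (u.map (symbolLanguage sem)).prod := by
  induction h with
  | refl => rfl
  | tail _ hstep ih =>
    obtain ⟨r, hr, hrw⟩ := hstep
    obtain ⟨p, q, rfl, rfl⟩ := hrw.exists_parts
    refine le_trans ?_ ih
    simp only [List.map_append, List.prod_append]
    gcongr
    simpa [symbolLanguage] using hsem r hr

theorem Derives.append_s14 {u u' v v' : List (Symbol T g.NT)} (hu : g.Derives u u')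
    (hv : g.Derives v v') : g.Derives (u ++ v) (u' ++ v') :=
  (hu.append_right v).trans (hv.append_left u')

theorem language_le_of_rules_le {sem : g.NT → Language T}
    (hsem : ∀ r ∈ g.rules, (r.output.map (symbolLanguage sem)).prod ≤ sem r.input) :
    g.language ≤ sem g.initial := by
  intro w hw
  have := ((g.mem_language_iff w).mp hw).prod_map_symbolLanguage_le hsem
  rw [prod_map_symbolLanguage_terminal] at this
  simpa [symbolLanguage] using this rfl

end ContextFreeGrammar

structure Transducer (Q S Δ : Type*) where
  transitions : Finset (Q × Option S × List Δ × Q)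
  start : Q
  accept : Set Q

namespace Transducer

variable {Q S Δ : Type*} (T : Transducer Q S Δ)

inductive Run : Q → Q → List S → List Δ → Prop
  | nil (p : Q) : Run p p [] []
  | cons {p q r : Q} {b : Option S} {out : List Δ} {w : List S} {o : List Δ} :
      (p, b, out, q) ∈ T.transitions → Run q r w o → Run p r (b.toList ++ w) (out ++ o)

def image (L : Language S) : Language Δ :=
  {o | ∃ w ∈ L, ∃ q ∈ T.accept, T.Run T.start q w o}

variable {T} {p q r : Q} {w w' : List S} {o o' : List Δ}

theorem Run.single {b : Option S} (h : (p, b, o, q) ∈ T.transitions) : T.Run p q b.toList o := by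
  simpa using Run.cons h (.nil q)

theorem Run.append_s14 (h : T.Run p q w o) (h' : T.Run q r w' o') : T.Run p r (w ++ w') (o ++ o') := by
  induction h with
  | nil => exact h'
  | cons ht _ ih => simpa using Run.cons ht (ih h')

theorem Run.exists_of_append (h : T.Run p r (w ++ w') o) :
    ∃ q o₁ o₂, T.Run p q w o₁ ∧ T.Run q r w' o₂ ∧ o = o₁ ++ o₂ := by
  generalize hw : w ++ w' = v at h
  induction h generalizing w with
  | nil p =>
    obtain ⟨rfl, rfl⟩ := List.append_eq_nil_iff.mp hw
    exact ⟨p, [], [], .nil p, .nil p, rfl⟩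
  | @cons p _ _ b out v o ht hrun ih =>
    cases w with
    | nil => exact ⟨p, [], _, .nil p, by simpa [← hw] using Run.cons ht hrun, rfl⟩
    | cons a w =>
      cases b with
      | none =>
        obtain ⟨s, o₁, o₂, h₁, h₂, rfl⟩ := ih hw
        exact ⟨s, out ++ o₁, o₂, by simpa using Run.cons ht h₁, h₂, by simp⟩
      | some b =>
        simp only [List.cons_append, Option.toList_some, List.cons.injEq] at hw
        obtain ⟨rfl, hw⟩ := hw
        obtain ⟨s, o₁, o₂, h₁, h₂, rfl⟩ := ih hw
        exact ⟨s, out ++ o₁, o₂, by simpa using Run.cons ht h₁, h₂, by simp⟩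

theorem Run.exists_of_singleton {a : S} (h : T.Run p q [a] o) :
    ∃ p₁ out p₂ o₁ o₂, T.Run p p₁ [] o₁ ∧ (p₁, some a, out, p₂) ∈ T.transitions ∧
      T.Run p₂ q [] o₂ ∧ o = o₁ ++ out ++ o₂ := by
  generalize hw : [a] = v at h
  induction h with
  | nil => cases hw
  | @cons p _ _ b out v o ht hrun ih =>
    cases b with
    | none =>
      obtain ⟨p₁, out', p₂, o₁, o₂, h₁, ht', h₂, rfl⟩ := ih hw
      exact ⟨p₁, out', p₂, out ++ o₁, o₂, by simpa using Run.cons ht h₁, ht', h₂, by simp⟩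
    | some b =>
      obtain ⟨rfl, rfl⟩ := List.cons_eq_cons.mp hw
      exact ⟨p, out, _, [], o, .nil p, ht, hrun, by simp⟩

inductive ImageNT (Q S N : Type)
  | start
  | triple (p : Q) (X : Symbol S N) (q : Q)
  | silent (p q : Q)

section Annotates

variable {Q S Δ N : Type}

inductive Annotates : List (Symbol S N) → Q → Q → List (Symbol Δ (ImageNT Q S N)) → Prop
  | nil (p : Q) : Annotates [] p p []
  | cons (X : Symbol S N) (p : Q) {s q : Q} {v : List (Symbol S N)}
      {e : List (Symbol Δ (ImageNT Q S N))} :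
      Annotates v s q e → Annotates (X :: v) p q (.nonterminal (.triple p X s) :: e)

variable {u v : List (Symbol S N)} {p q s : Q} {e e₁ e₂ : List (Symbol Δ (ImageNT Q S N))}

theorem Annotates.append_s14 (h₁ : Annotates u p s e₁) (h₂ : Annotates v s q e₂) :
    Annotates (u ++ v) p q (e₁ ++ e₂) := by
  induction h₁ with
  | nil => exact h₂
  | cons X p _ ih => exact .cons X p (ih h₂)

theorem Annotates.exists_of_append (h : Annotates (u ++ v) p q e) :
    ∃ s e₁ e₂, Annotates u p s e₁ ∧ Annotates v s q e₂ ∧ e = e₁ ++ e₂ := by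
  induction u generalizing p e with
  | nil => exact ⟨p, [], e, .nil p, h, rfl⟩
  | cons X u ih =>
    cases h with
    | cons _ _ h =>
      obtain ⟨s, e₁, e₂, h₁, h₂, rfl⟩ := ih h
      exact ⟨s, _ :: e₁, e₂, .cons X p h₁, h₂, rfl⟩

theorem finite_setOf_annotates [Finite Q] (v : List (Symbol S N)) :
    {x : Q × Q × List (Symbol Δ (ImageNT Q S N)) | Annotates v x.1 x.2.1 x.2.2}.Finite := by
  induction v with
  | nil =>
    refine (Set.finite_range fun p : Q =>
      (p, p, ([] : List (Symbol Δ (ImageNT Q S N))))).subset ?_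
    rintro ⟨p, q, e⟩ (h : Annotates [] p q e)
    cases h
    exact ⟨p, rfl⟩
  | cons X v ih =>
    refine ((Set.finite_univ (α := Q)).prod ih |>.image fun x =>
      (x.1, x.2.2.1, .nonterminal (.triple x.1 X x.2.1) :: x.2.2.2)).subset ?_
    rintro ⟨p, q, e⟩ (h : Annotates (X :: v) p q e)
    cases h with
    | cons _ _ h => exact ⟨(p, _, q, _), ⟨trivial, h⟩, rfl⟩

end Annotates

section Image

variable {Q S Δ : Type} (T : Transducer Q S Δ) (G : ContextFreeGrammar S)

inductive IsImageRule : ContextFreeRule Δ (ImageNT Q S G.NT) → Prop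
  /- The silent prefix lets a run begin with silent moves; when the input word is empty it is
  the whole run, and the triple then generates the empty word. -/
  | start (p : Q) {q : Q} (hq : q ∈ T.accept) :
      IsImageRule ⟨.start, [.nonterminal (.silent T.start p),
        .nonterminal (.triple p (.nonterminal G.initial) q)]⟩
  | simulate {r : ContextFreeRule S G.NT} (hr : r ∈ G.rules) {p q : Q}
      {e : List (Symbol Δ (ImageNT Q S G.NT))} (he : Annotates r.output p q e) :
      IsImageRule ⟨.triple p (.nonterminal r.input) q, e⟩
  | letter {p₁ p₂ : Q} {a : S} {out : List Δ} (ht : (p₁, some a, out, p₂) ∈ T.transitions)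
      (p q : Q) :
      IsImageRule ⟨.triple p (.terminal a) q,
        .nonterminal (.silent p p₁) :: out.map .terminal ++ [.nonterminal (.silent p₂ q)]⟩
  | silentStep {p p' : Q} {out : List Δ} (ht : (p, none, out, p') ∈ T.transitions) (q : Q) :
      IsImageRule ⟨.silent p q, out.map .terminal ++ [.nonterminal (.silent p' q)]⟩
  | silentStop (q : Q) : IsImageRule ⟨.silent q q, []⟩

theorem finite_setOf_isImageRule [Finite Q] : {r | T.IsImageRule G r}.Finite := by
  let startRules : Set (ContextFreeRule Δ (ImageNT Q S G.NT)) :=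
    Set.range fun pq : Q × Q => ⟨.start, [.nonterminal (.silent T.start pq.1),
      .nonterminal (.triple pq.1 (.nonterminal G.initial) pq.2)]⟩
  let simulationRules : Set (ContextFreeRule Δ (ImageNT Q S G.NT)) :=
    ⋃ r ∈ G.rules, (fun x : Q × Q × List (Symbol Δ (ImageNT Q S G.NT)) =>
      ⟨.triple x.1 (.nonterminal r.input) x.2.1, x.2.2⟩) ''
      {x | Annotates r.output x.1 x.2.1 x.2.2}
  let transitionRules : Set (ContextFreeRule Δ (ImageNT Q S G.NT)) :=
    ⋃ t ∈ T.transitions, t.2.1.elim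
      (Set.range fun q => ⟨.silent t.1 q,
        t.2.2.1.map .terminal ++ [.nonterminal (.silent t.2.2.2 q)]⟩)
      (fun a => Set.range fun pq : Q × Q => ⟨.triple pq.1 (.terminal a) pq.2,
        .nonterminal (.silent pq.1 t.1) :: t.2.2.1.map .terminal ++
          [.nonterminal (.silent t.2.2.2 pq.2)]⟩)
  let stopRules : Set (ContextFreeRule Δ (ImageNT Q S G.NT)) :=
    Set.range fun q => ⟨.silent q q, []⟩
  have hfin : (startRules ∪ simulationRules ∪ transitionRules ∪ stopRules).Finite := by
    refine .union (.union (.union (Set.finite_range _) ?_) ?_) (Set.finite_range _)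
    · exact G.rules.finite_toSet.biUnion fun r _ => (finite_setOf_annotates r.output).image _
    · refine T.transitions.finite_toSet.biUnion fun t _ => ?_
      cases t.2.1 <;> exact Set.finite_range _
  refine hfin.subset ?_
  rintro _ (⟨p, -⟩ | ⟨hr, he⟩ | ⟨ht, p, q⟩ | ⟨ht, q⟩ | q)
  · exact .inl (.inl (.inl ⟨(p, _), rfl⟩))
  · exact .inl (.inl (.inr (Set.mem_biUnion hr ⟨(_, _, _), he, rfl⟩)))
  · exact .inl (.inr (Set.mem_biUnion ht ⟨(p, q), rfl⟩))
  · exact .inl (.inr (Set.mem_biUnion ht ⟨q, rfl⟩))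
  · exact .inr ⟨q, rfl⟩

noncomputable abbrev imageGrammar [Finite Q] : ContextFreeGrammar Δ where
  NT := ImageNT Q S G.NT
  initial := .start
  rules := (T.finite_setOf_isImageRule G).toFinset

def imageNTLanguage : ImageNT Q S G.NT → Language Δ
  | .start => T.image G.language
  | .triple p X q => {o | ∃ w, T.Run p q w o ∧ G.Derives [X] (w.map .terminal)}
  | .silent p q => {o | T.Run p q [] o}

open ContextFreeGrammar

variable {T G}

theorem Annotates.prod_map_le {v : List (Symbol S G.NT)} {p q : Q}
    {e : List (Symbol Δ (ImageNT Q S G.NT))} (h : Annotates v p q e) :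
    (e.map (symbolLanguage (T.imageNTLanguage G))).prod ≤
      {o | ∃ w, T.Run p q w o ∧ G.Derives v (w.map .terminal)} := by
  induction h with
  | nil p =>
    rintro o rfl
    exact ⟨[], .nil p, .refl _⟩
  | cons X p _ ih =>
    rintro _ ⟨o₁, ⟨w₁, hrun₁, hder₁⟩, o₂, ho₂, rfl⟩
    obtain ⟨w₂, hrun₂, hder₂⟩ := ih ho₂
    refine ⟨w₁ ++ w₂, hrun₁.append_s14 hrun₂, ?_⟩
    simpa using hder₁.append_s14 hder₂

theorem IsImageRule.prod_map_le {r : ContextFreeRule Δ (ImageNT Q S G.NT)}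
    (h : T.IsImageRule G r) :
    (r.output.map (symbolLanguage (T.imageNTLanguage G))).prod ≤ T.imageNTLanguage G r.input := by
  cases h with
  | start p hq =>
    rintro _ ⟨o₁, hrun₁, _, ⟨o₂, ⟨w, hrun₂, hder⟩, _, rfl, rfl⟩, rfl⟩
    exact ⟨w, (G.mem_language_iff w).mpr hder, _, hq, by simpa using hrun₁.append_s14 hrun₂⟩
  | simulate hr he =>
    intro o ho
    obtain ⟨w, hrun, hder⟩ := he.prod_map_le ho
    exact ⟨w, hrun, Produces.trans_derives ⟨_, hr, ContextFreeRule.Rewrites.input_output⟩ hder⟩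
  | letter ht p q =>
    simp only [List.map_cons, List.map_append, List.prod_cons, List.prod_append,
      prod_map_symbolLanguage_terminal]
    rintro _ ⟨_, ⟨o₁, hrun₁, _, rfl, rfl⟩, _, ⟨o₂, hrun₂, _, rfl, rfl⟩, rfl⟩
    exact ⟨[_], by simpa using hrun₁.append_s14 ((Run.single ht).append_s14 hrun₂), .refl _⟩
  | silentStep ht q =>
    simp only [List.map_append, List.prod_append, prod_map_symbolLanguage_terminal]
    rintro _ ⟨out, rfl, o, ⟨o, hrun, _, rfl, rfl⟩, rfl⟩
    show T.Run _ _ [] _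
    simpa using (Run.single ht).append_s14 (hrun : T.Run _ _ [] o)
  | silentStop q =>
    rintro _ rfl
    exact .nil q

variable [Finite Q] {p q : Q} {w : List S} {o : List Δ}

theorem IsImageRule.produces {r : ContextFreeRule Δ (ImageNT Q S G.NT)} (h : T.IsImageRule G r) :
    (T.imageGrammar G).Produces [.nonterminal r.input] r.output :=
  ⟨r, (Set.Finite.mem_toFinset _).mpr h, ContextFreeRule.Rewrites.input_output⟩

theorem derives_silent_of_run (h : T.Run p q [] o) :
    (T.imageGrammar G).Derives [.nonterminal (.silent p q)] (o.map .terminal) := by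
  generalize hw : ([] : List S) = w at h
  induction h with
  | nil q => exact (IsImageRule.silentStop q).produces.single
  | @cons _ _ _ b out _ o ht _ ih =>
    obtain ⟨hb, rfl⟩ := List.append_eq_nil_iff.mp hw.symm
    obtain rfl : b = none := Option.toList_eq_nil_iff.mp hb
    refine (IsImageRule.silentStep (G := G) ht _).produces.trans_derives ?_
    simpa using (ih rfl).append_left (out.map Symbol.terminal)

theorem derives_letter_of_run {a : S} (h : T.Run p q [a] o) :
    (T.imageGrammar G).Derives [.nonterminal (.triple p (.terminal a) q)] (o.map .terminal) := by
  obtain ⟨p₁, out, p₂, o₁, o₂, h₁, ht, h₂, rfl⟩ := h.exists_of_singleton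
  refine (IsImageRule.letter (G := G) ht p q).produces.trans_derives ?_
  simpa using (derives_silent_of_run h₁).append_s14
    ((Derives.refl (out.map Symbol.terminal)).append_s14 (derives_silent_of_run h₂))

theorem derives_triple_of_derives {A : G.NT} {v : List (Symbol S G.NT)}
    (hv : G.Derives [.nonterminal A] v) {e : List (Symbol Δ (ImageNT Q S G.NT))}
    (he : Annotates v p q e) :
    (T.imageGrammar G).Derives [.nonterminal (.triple p (.nonterminal A) q)] e := by
  induction hv generalizing e with
  | refl =>
    cases he with
    | cons _ _ he => cases he; exact .refl _
  | tail _ hstep ih =>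
    obtain ⟨r, hr, hrw⟩ := hstep
    obtain ⟨u, u', rfl, rfl⟩ := hrw.exists_parts
    obtain ⟨s', e', e₃, he', h₃, rfl⟩ := he.exists_of_append
    obtain ⟨s, e₁, e₂, h₁, h₂, rfl⟩ := he'.exists_of_append
    have hsplit := (h₁.append_s14 (.cons (.nonterminal r.input) s (.nil s'))).append_s14 h₃
    refine (ih hsplit).trans ?_
    simpa using (((IsImageRule.simulate (T := T) hr h₂).produces.append_left e₁).append_right
      e₃).single

theorem exists_annotates_of_run (h : T.Run p q w o) (hw : w ≠ []) :
    ∃ e, Annotates (w.map .terminal) p q e ∧ (T.imageGrammar G).Derives e (o.map .terminal) := by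
  induction w generalizing p o with
  | nil => exact absurd rfl hw
  | cons a w ih =>
    rcases eq_or_ne w [] with rfl | hw'
    · exact ⟨_, .cons _ p (.nil q), by simpa using derives_letter_of_run h⟩
    · obtain ⟨s, o₁, o₂, h₁, h₂, rfl⟩ := Run.exists_of_append (w := [a]) h
      obtain ⟨e, he, hder⟩ := ih h₂ hw'
      refine ⟨_, .cons _ p he, ?_⟩
      simpa using (derives_letter_of_run h₁).append_s14 hder

theorem image_le_language : T.image G.language ≤ (T.imageGrammar G).language := by
  rintro o ⟨w, hw, q, hq, hrun⟩
  rw [ContextFreeGrammar.mem_language_iff] at hw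
  apply (ContextFreeGrammar.mem_language_iff _ o).mpr
  rcases eq_or_ne w [] with rfl | hne
  · refine (IsImageRule.start q hq).produces.trans_derives ?_
    simpa using (derives_silent_of_run hrun).append_s14
      (derives_triple_of_derives (T := T) hw (.nil q))
  · obtain ⟨e, he, hder⟩ := exists_annotates_of_run hrun hne
    refine (IsImageRule.start T.start hq).produces.trans_derives ?_
    simpa using (derives_silent_of_run (.nil _)).append_s14
      ((derives_triple_of_derives hw he).trans hder)

theorem imageGrammar_language : (T.imageGrammar G).language = T.image G.language :=
  le_antisymm
    (language_le_of_rules_le (g := T.imageGrammar G) (sem := T.imageNTLanguage G) fun _ hr =>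
      IsImageRule.prod_map_le ((Set.Finite.mem_toFinset _).mp hr))
    image_le_language

end Image

end Transducer

theorem Transducer.isContextFree_image {Q S Δ : Type} [Finite Q]
    (T : Transducer Q S Δ) {L : Language S} (hL : L.IsContextFree) :
    (T.image L).IsContextFree := by
  obtain ⟨G, rfl⟩ := hL
  exact ⟨T.imageGrammar G, Transducer.imageGrammar_language⟩

namespace Transducer

section OfHom

variable {Γ S Δ Q : Type*} [Fintype Γ] [Fintype Q] (f : FreeMonoid Γ →* FreeMonoid S)
  (g : FreeMonoid Γ →* FreeMonoid Δ) (M : DFA Γ Q)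

open Classical in
noncomputable def owedSuffixes : Finset (List S) :=
  insert [] (Finset.univ.biUnion fun γ : Γ => (FreeMonoid.toList (f (.of γ))).tails.toFinset)

variable {f}

theorem nil_mem_owedSuffixes : [] ∈ owedSuffixes f := by
  classical
  exact Finset.mem_insert_self _ _

theorem letter_mem_owedSuffixes (γ : Γ) : FreeMonoid.toList (f (.of γ)) ∈ owedSuffixes f := by
  classical
  simp [owedSuffixes]
  exact .inr ⟨γ, List.suffix_refl _⟩

theorem tail_mem_owedSuffixes {l : List S} (hl : l ∈ owedSuffixes f) : l.tail ∈ owedSuffixes f := by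
  classical
  simp only [owedSuffixes, Finset.mem_insert, Finset.mem_biUnion, Finset.mem_univ, true_and,
    List.mem_toFinset, List.mem_tails] at hl ⊢
  rcases hl with rfl | ⟨γ, hγ⟩
  · exact .inl rfl
  · exact .inr ⟨γ, (List.tail_suffix l).trans hγ⟩

variable (f)

open Classical in
noncomputable def ofHom : Transducer (Q × owedSuffixes f) S Δ where
  transitions :=
    (Finset.univ.image fun x : Q × Γ => ((x.1, ⟨[], nil_mem_owedSuffixes⟩), none,
      FreeMonoid.toList (g (.of x.2)), (M.step x.1 x.2, ⟨_, letter_mem_owedSuffixes x.2⟩))) ∪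
    (Finset.univ.image fun x : Q × owedSuffixes f =>
      (x, x.2.1.head?, [], (x.1, ⟨x.2.1.tail, tail_mem_owedSuffixes x.2.2⟩)))
  start := (M.start, ⟨[], nil_mem_owedSuffixes⟩)
  accept := {x | x.1 ∈ M.accept ∧ x.2.1 = []}

variable {f g M}

theorem run_ofHom_owed (p : Q) (l : owedSuffixes f) :
    (ofHom f g M).Run (p, l) (p, ⟨[], nil_mem_owedSuffixes⟩) l.1 [] := by
  obtain ⟨l, hl⟩ := l
  induction l with
  | nil => exact .nil _
  | cons a l ih =>
    have ht : ((p, ⟨a :: l, hl⟩), some a, [], (p, ⟨l, tail_mem_owedSuffixes hl⟩)) ∈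
        (ofHom f g M).transitions := by
      classical
      exact Finset.mem_union_right _
        (Finset.mem_image_of_mem _ (Finset.mem_univ ((p, ⟨a :: l, hl⟩) : Q × owedSuffixes f)))
    exact .cons ht (ih _)

theorem run_ofHom_ofList (p : Q) (r : List Γ) :
    (ofHom f g M).Run (p, ⟨[], nil_mem_owedSuffixes⟩)
      (M.evalFrom p r, ⟨[], nil_mem_owedSuffixes⟩)
      (FreeMonoid.toList (f (.ofList r))) (FreeMonoid.toList (g (.ofList r))) := by
  induction r generalizing p with
  | nil => simpa using Run.nil _
  | cons γ r ih =>
    have ht : ((p, ⟨[], nil_mem_owedSuffixes⟩), none, FreeMonoid.toList (g (.of γ)),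
        (M.step p γ, ⟨_, letter_mem_owedSuffixes γ⟩)) ∈ (ofHom f g M).transitions := by
      classical
      exact Finset.mem_union_left _ (Finset.mem_image_of_mem _ (Finset.mem_univ (p, γ)))
    simpa [FreeMonoid.ofList_cons] using
      (Run.cons ht (run_ofHom_owed _ _)).append_s14 (ih (M.step p γ))

theorem exists_of_run_ofHom {a b : Q × owedSuffixes f} {w : List S} {o : List Δ}
    (h : (ofHom f g M).Run a b w o) (hb : b.2.1 = []) :
    ∃ r, M.evalFrom a.1 r = b.1 ∧ a.2.1 ++ FreeMonoid.toList (f (.ofList r)) = w ∧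
      FreeMonoid.toList (g (.ofList r)) = o := by
  induction h with
  | nil => exact ⟨[], rfl, by simpa using hb, by simp⟩
  | cons ht _ ih =>
    classical
    obtain ⟨r, hr₁, hr₂, hr₃⟩ := ih hb
    simp only [ofHom, Finset.mem_union, Finset.mem_image, Finset.mem_univ, true_and,
      Prod.mk.injEq] at ht
    rcases ht with ⟨⟨p, γ⟩, rfl, rfl, rfl, rfl⟩ | ⟨⟨p, ⟨l, hl⟩⟩, rfl, rfl, rfl, rfl⟩
    · exact ⟨γ :: r, hr₁, by simpa [FreeMonoid.ofList_cons] using hr₂,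
        by simp [FreeMonoid.ofList_cons, hr₃]⟩
    · refine ⟨r, hr₁, ?_, by simpa using hr₃⟩
      cases l <;> simpa using hr₂

theorem ofHom_image (L : Language S) :
    (ofHom f g M).image L = {w | ∃ r ∈ M.accepts, FreeMonoid.toList (f (.ofList r)) ∈ L ∧
      FreeMonoid.toList (g (.ofList r)) = w} := by
  ext o
  constructor
  · rintro ⟨w, hw, q, ⟨hq, hq'⟩, hrun⟩
    obtain ⟨r, hr₁, rfl, hr₃⟩ := exists_of_run_ofHom hrun hq'
    refine ⟨r, M.mem_accepts.mpr ?_, hw, hr₃⟩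
    change M.evalFrom (ofHom f g M).start.1 r ∈ M.accept
    rwa [hr₁]
  · rintro ⟨r, hr, hfr, rfl⟩
    exact ⟨_, hfr, _, ⟨M.mem_accepts.mp hr, rfl⟩, run_ofHom_ofList M.start r⟩

end OfHom

end Transducer

theorem contextFree_image_rational_transduction_general {Γ S Δ : Type}
    [Fintype Γ]
    (f : FreeMonoid Γ →* FreeMonoid S) (g : FreeMonoid Γ →* FreeMonoid Δ)
    (R : Language Γ) (hR : R.IsRegular) (L : Language S) (hL : L.IsContextFree) :
    Language.IsContextFree
      {w : List Δ | ∃ r ∈ R, FreeMonoid.toList (f (FreeMonoid.ofList r)) ∈ L ∧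
        FreeMonoid.toList (g (FreeMonoid.ofList r)) = w} := by
  obtain ⟨Q, _, M, rfl⟩ := hR
  rw [← Transducer.ofHom_image]
  exact Transducer.isContextFree_image _ hL

/-- Theorem 6.2 (for context-free languages): the family of context-free languages is
closed under rational transduction.  The rational transduction `Σ* → Δ*` is presented
as `{(f(r), g(r)) | r ∈ R}` for homomorphisms `f : Γ* → Σ*`, `g : Γ* → Δ*` and a
regular language `R ⊆ Γ*`. -/
theorem contextFree_image_rational_transduction {Γ S Δ : Type}
    [Fintype Γ] [Fintype S] [Fintype Δ]
    (f : FreeMonoid Γ →* FreeMonoid S) (g : FreeMonoid Γ →* FreeMonoid Δ)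
    (R : Language Γ) (hR : R.IsRegular) (L : Language S) (hL : L.IsContextFree) :
    Language.IsContextFree
      {w : List Δ | ∃ r ∈ R, FreeMonoid.toList (f (FreeMonoid.ofList r)) ∈ L ∧
        FreeMonoid.toList (g (FreeMonoid.ofList r)) = w} :=
  contextFree_image_rational_transduction_general f g R hR L hL
end

section
/- For every context-free language L over a finite alphabet Σ there is an integer k such that any word z ∈ L of length greater than k can be written as z = u v w x y so that (i) v ≠ ε or x ≠ ε, (ii) |v w x| ≤ k, and (iii) u vⁱ w xⁱ y ∈ L for all i ≥ 0. -/
namespace CFPump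

open scoped Classical

variable {T : Type}

/-- Sized derivation forests: `Der g s w n` means the sentential form `s` derives the
terminal word `w` via a derivation tree(s) using `n` rule applications. -/
inductive Der (g : ContextFreeGrammar T) : List (Symbol T g.NT) → List T → ℕ → Prop
  | nil : Der g [] [] 0
  | term {s w n} (a : T) (h : Der g s w n) : Der g (Symbol.terminal a :: s) (a :: w) n
  | nonterm {s w n u k} (r : ContextFreeRule T g.NT) (hr : r ∈ g.rules)
      (hu : Der g r.output u k) (h : Der g s w n) :
      Der g (Symbol.nonterminal r.input :: s) (u ++ w) (k + n + 1)

variable {g : ContextFreeGrammar T}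

lemma Der.congr {s s' w w' n n'} (h : Der g s w n) (hs : s = s') (hw : w = w') (hn : n = n') :
    Der g s' w' n' := by subst hs hw hn; exact h

lemma Der.append {s w n s' w' n'} (h : Der g s w n) (h' : Der g s' w' n') :
    Der g (s ++ s') (w ++ w') (n + n') := by
  induction h with
  | nil => simpa using h'
  | term a h ih => exact (ih.term a).congr rfl rfl rfl
  | nonterm r hr hu h ihu ih =>
      exact (Der.nonterm r hr hu ih).congr (by simp) (by simp) (by omega)

lemma Der.of_map_terminal (w : List T) : Der g (w.map Symbol.terminal) w 0 := by
  induction w with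
  | nil => exact Der.nil
  | cons a w ih => exact ih.term a

lemma Der.append_inv {s s' w n} (h : Der g (s ++ s') w n) :
    ∃ w1 w2 n1 n2, w = w1 ++ w2 ∧ n = n1 + n2 ∧ Der g s w1 n1 ∧ Der g s' w2 n2 := by
  induction s generalizing w n with
  | nil => exact ⟨[], w, 0, n, rfl, (by omega), Der.nil, h⟩
  | cons sym s ih =>
      cases h with
      | term a h =>
          obtain ⟨w1, w2, n1, n2, rfl, rfl, d1, d2⟩ := ih h
          exact ⟨a :: w1, w2, n1, n2, rfl, rfl, d1.term a, d2⟩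
      | nonterm r hr hu h =>
          obtain ⟨w1, w2, n1, n2, rfl, rfl, d1, d2⟩ := ih h
          exact ⟨_ ++ w1, w2, _, n2, by simp, by omega, Der.nonterm r hr hu d1, d2⟩

lemma Der.single_nt {A u k} (r : ContextFreeRule T g.NT) (hr : r ∈ g.rules) (hA : r.input = A)
    (hu : Der g r.output u k) : Der g [Symbol.nonterminal A] u (k + 1) := by
  subst hA
  exact ((hu.nonterm r hr) Der.nil).congr rfl (by simp) rfl

lemma Der.single_nt_inv {A w n} (h : Der g [Symbol.nonterminal A] w n) :
    ∃ r ∈ g.rules, r.input = A ∧ ∃ k, Der g r.output w k ∧ n = k + 1 := by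
  cases h with
  | nonterm r hr hu h =>
      cases h
      exact ⟨r, hr, rfl, _, hu.congr rfl (by simp) rfl, by omega⟩

open ContextFreeGrammar in
lemma Der.derives {s w n} (h : Der g s w n) : g.Derives s (w.map Symbol.terminal) := by
  induction h with
  | nil => exact ContextFreeGrammar.Derives.refl []
  | term a h ih =>
      have := ih.append_left [Symbol.terminal a]
      simpa using this
  | nonterm r hr hu h ihu ih =>
      rename_i s' w' n' u' k'
      have hstep : g.Produces (Symbol.nonterminal r.input :: s') (r.output ++ s') :=
        ⟨r, hr, ContextFreeRule.Rewrites.head s'⟩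
      have h1 := ihu.append_right s'
      have h2 := ih.append_left (List.map Symbol.terminal u')
      rw [List.map_append]
      exact hstep.trans_derives (h1.trans h2)

open ContextFreeGrammar in
lemma der_of_derives {s : List (Symbol T g.NT)} {w : List T}
    (h : g.Derives s (w.map Symbol.terminal)) : ∃ n, Der g s w n := by
  induction h using Relation.ReflTransGen.head_induction_on with
  | refl => exact ⟨0, Der.of_map_terminal w⟩
  | head hp _ ih =>
      obtain ⟨n, hn⟩ := ih
      obtain ⟨r, hr, hrw⟩ := hp
      obtain ⟨p, q, rfl, rfl⟩ := hrw.exists_parts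
      obtain ⟨w1, w23, n1, n23, rfl, rfl, d1, d23⟩ := Der.append_inv (s := p) (by
        simpa [List.append_assoc] using hn)
      obtain ⟨w2, w3, n2, n3, rfl, rfl, d2, d3⟩ := Der.append_inv (s := r.output) d23
      refine ⟨n1 + (n2 + 1) + n3, ?_⟩
      have hmid : Der g [Symbol.nonterminal r.input] w2 (n2 + 1) := Der.single_nt r hr rfl d2
      exact ((d1.append hmid).append d3).congr (by simp) (by simp) (by omega)

/-- If the yield is long, some nonterminal child subtree has a long yield. -/
lemma Der.split {s w n} (h : Der g s w n) {c : ℕ} (hc : 1 ≤ c)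
    (hlen : c * s.length < w.length) :
    ∃ s1 B s2 w1 u w2 n1 k n2,
      s = s1 ++ Symbol.nonterminal B :: s2 ∧ w = w1 ++ u ++ w2 ∧ n = n1 + k + n2 ∧
      Der g [Symbol.nonterminal B] u k ∧ c < u.length ∧ Der g s1 w1 n1 ∧ Der g s2 w2 n2 := by
  induction h with
  | nil => simp at hlen
  | term a h ih =>
      rename_i s' w' n'
      have hw : c * s'.length < w'.length := by
        simp only [List.length_cons] at hlen
        have h2 : c * (s'.length + 1) = c * s'.length + c := Nat.mul_succ c s'.length
        omega
      obtain ⟨s1, B, s2, w1, u, w2, n1, k, n2, rfl, rfl, rfl, hd, hlt, d1, d2⟩ := ih hw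
      exact ⟨Symbol.terminal a :: s1, B, s2, a :: w1, u, w2, n1, k, n2, rfl, rfl, rfl,
        hd, hlt, d1.term a, d2⟩
  | nonterm r hr hu h ihu ih =>
      rename_i s' w' n' u' k'
      by_cases hcu : c < u'.length
      · exact ⟨[], r.input, s', [], u', w', 0, k' + 1, n', rfl, rfl, by omega,
          Der.single_nt r hr rfl hu, hcu, Der.nil, h⟩
      · push_neg at hcu
        have hw : c * s'.length < w'.length := by
          simp only [List.length_cons, List.length_append] at hlen
          have h2 : c * (s'.length + 1) = c * s'.length + c := Nat.mul_succ c s'.length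
          omega
        obtain ⟨s1, B, s2, w1, u, w2, n1, k, n2, rfl, rfl, rfl, hd, hlt, d1, d2⟩ := ih hw
        exact ⟨Symbol.nonterminal r.input :: s1, B, s2, u' ++ w1, u, w2, k' + n1 + 1, k, n2,
          rfl, by simp, by omega, hd, hlt, Der.nonterm r hr hu d1, d2⟩

/-- Sized one-hole contexts: `Ctx g A u B y n` means there is a derivation-tree context
with root `A`, a single hole labelled `B`, terminal yield `u` to the left of the hole and
`y` to the right, using `n` rule applications. -/
inductive Ctx (g : ContextFreeGrammar T) : g.NT → List T → g.NT → List T → ℕ → Prop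
  | refl (A : g.NT) : Ctx g A [] A [] 0
  | step {A B C : g.NT} {s1 s2 : List (Symbol T g.NT)} {w1 w2 u y : List T} {n1 n2 n3 : ℕ}
      (r : ContextFreeRule T g.NT) (hr : r ∈ g.rules) (hA : r.input = A)
      (hout : r.output = s1 ++ Symbol.nonterminal B :: s2)
      (h1 : Der g s1 w1 n1) (h2 : Der g s2 w2 n2) (hc : Ctx g B u C y n3) :
      Ctx g A (w1 ++ u) C (y ++ w2) (n1 + n2 + n3 + 1)

lemma Ctx.congr {A B u u' y y' n n'} (h : Ctx g A u B y n) (hu : u = u') (hy : y = y')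
    (hn : n = n') : Ctx g A u' B y' n' := by subst hu hy hn; exact h

lemma Ctx.single {A B : g.NT} {s1 s2 w1 w2 n1 n2}
    (r : ContextFreeRule T g.NT) (hr : r ∈ g.rules) (hA : r.input = A)
    (hout : r.output = s1 ++ Symbol.nonterminal B :: s2)
    (h1 : Der g s1 w1 n1) (h2 : Der g s2 w2 n2) :
    Ctx g A w1 B w2 (n1 + n2 + 1) :=
  (Ctx.step r hr hA hout h1 h2 (Ctx.refl B)).congr (by simp) (by simp) (by omega)

lemma Ctx.comp {A B C u u' y y' n n'} (h : Ctx g A u B y n) (h' : Ctx g B u' C y' n') :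
    Ctx g A (u ++ u') C (y' ++ y) (n + n') := by
  induction h with
  | refl A => exact h'.congr (by simp) (by simp) (by omega)
  | step r hr hA hout h1 h2 hc ih =>
      exact (Ctx.step r hr hA hout h1 h2 (ih h')).congr (by simp) (by simp) (by omega)

lemma Ctx.fill {A B u y n w k} (h : Ctx g A u B y n) (hw : Der g [Symbol.nonterminal B] w k) :
    Der g [Symbol.nonterminal A] (u ++ w ++ y) (n + k) := by
  induction h with
  | refl A => exact hw.congr rfl (by simp) (by omega)
  | step r hr hA hout h1 h2 hc ih =>
      rename_i A' B' C' s1 s2 w1 w2 u' y' n1 n2 n3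
      have hmid := ih hw
      have hout' : Der g r.output (w1 ++ (u' ++ w ++ y') ++ w2) (n1 + (n3 + k) + n2) := by
        rw [hout]
        exact ((h1.append hmid).append h2).congr (by simp) rfl rfl
      exact (Der.single_nt r hr hA hout').congr rfl (by simp) (by omega)

open ContextFreeGrammar in
lemma Ctx.derives {A B u y n} (h : Ctx g A u B y n) :
    g.Derives [Symbol.nonterminal A]
      (u.map Symbol.terminal ++ [Symbol.nonterminal B] ++ y.map Symbol.terminal) := by
  induction h with
  | refl A => simpa using Derives.refl [Symbol.nonterminal A]
  | step r hr hA hout h1 h2 hc ih =>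
      rename_i A' B' C' s1 s2 w1 w2 u' y' n1 n2 n3
      subst hA
      have hstep : g.Produces [Symbol.nonterminal r.input] r.output :=
        ⟨r, hr, ContextFreeRule.Rewrites.input_output⟩
      refine hstep.trans_derives ?_
      rw [hout]
      have d1 : g.Derives (s1 ++ Symbol.nonterminal B' :: s2)
          (w1.map Symbol.terminal ++ Symbol.nonterminal B' :: w2.map Symbol.terminal) := by
        have e1 := h1.derives.append_right (Symbol.nonterminal B' :: s2)
        have e2 := (h2.derives.append_left [Symbol.nonterminal B']).append_left
          (w1.map Symbol.terminal)
        refine e1.trans ?_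
        simpa using e2
      refine d1.trans ?_
      have e3 := (ih.append_left (w1.map Symbol.terminal)).append_right
        (w2.map Symbol.terminal)
      simp only [List.append_assoc, List.cons_append, List.nil_append, List.map_append] at e3 ⊢
      exact e3

/-- Maximal length of a rule right-hand side (at least 1). -/
noncomputable def M (g : ContextFreeGrammar T) : ℕ :=
  max (g.rules.sup fun r => r.output.length) 1

lemma one_le_M : 1 ≤ M g := le_max_right _ 1

lemma output_length_le_M {r : ContextFreeRule T g.NT} (hr : r ∈ g.rules) :
    r.output.length ≤ M g :=
  le_trans (Finset.le_sup (f := fun r => r.output.length) hr) (le_max_left _ _)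

/-- Descend to a subtree whose yield length lies in `(M^d, M^(d+1)]`. -/
lemma descend : ∀ n {A : g.NT} {w : List T}, Der g [Symbol.nonterminal A] w n →
    ∀ d : ℕ, M g ^ (d + 1) < w.length →
    ∃ u B y w' n1 n2, Ctx g A u B y n1 ∧ Der g [Symbol.nonterminal B] w' n2 ∧
      n = n1 + n2 ∧ w = u ++ w' ++ y ∧ M g ^ d < w'.length ∧ w'.length ≤ M g ^ (d + 1) := by
  intro n
  induction n using Nat.strong_induction_on with
  | _ n IH =>
      intro A w h d hlen
      obtain ⟨r, hr, hA, k, hout, rfl⟩ := h.single_nt_inv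
      have hsplit := hout.split (c := M g ^ d) (Nat.one_le_pow _ _ one_le_M) (by
        calc M g ^ d * r.output.length ≤ M g ^ d * M g :=
              Nat.mul_le_mul_left _ (output_length_le_M hr)
          _ = M g ^ (d + 1) := (pow_succ (M g) d).symm
          _ < w.length := hlen)
      obtain ⟨s1, B, s2, w1, u, w2, n1, kB, n2, hso, rfl, rfl, hdB, hult, d1, d2⟩ := hsplit
      have hctx : Ctx g A w1 B w2 (n1 + n2 + 1) := Ctx.single r hr hA hso d1 d2
      by_cases hle : u.length ≤ M g ^ (d + 1)
      · exact ⟨w1, B, w2, u, n1 + n2 + 1, kB, hctx, hdB, by omega, rfl, hult, hle⟩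
      · push_neg at hle
        obtain ⟨u', B', y', w'', m1, m2, hc', hd', hm, hw, hlt, hle'⟩ :=
          IH kB (by omega) hdB d hle
        refine ⟨w1 ++ u', B', y' ++ w2, w'', (n1 + n2 + 1) + m1, m2,
          hctx.comp hc', hd', by omega, ?_, hlt, hle'⟩
        rw [hw]; simp [List.append_assoc]

/-- Chains of nested subtrees; the list records the labels of the chain nodes. -/
inductive NChain (g : ContextFreeGrammar T) : g.NT → List T → ℕ → List g.NT → Prop
  | nil {A w n} (h : Der g [Symbol.nonterminal A] w n) : NChain g A w n [A]
  | cons {A B u y w' n1 n2 l} (hc : Ctx g A u B y n1) (h1 : 0 < n1)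
      (hch : NChain g B w' n2 l) : NChain g A (u ++ w' ++ y) (n1 + n2) (A :: l)

lemma NChain.congr {A w w' n n' l} (h : NChain g A w n l) (hw : w = w') (hn : n = n') :
    NChain g A w' n' l := by subst hw hn; exact h

lemma NChain.der {A w n l} (h : NChain g A w n l) : Der g [Symbol.nonterminal A] w n := by
  induction h with
  | nil h => exact h
  | cons hc h1 hch ih => exact hc.fill ih

lemma NChain.labels_mem {A w n l} (h : NChain g A w n l) :
    ∀ X ∈ l, X ∈ g.rules.image ContextFreeRule.input := by
  induction h with
  | nil h =>
      obtain ⟨r, hr, hA, _, _, _⟩ := h.single_nt_inv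
      intro X hX
      simp only [List.mem_singleton] at hX
      subst hX
      exact Finset.mem_image.mpr ⟨r, hr, hA⟩
  | cons hc h1 hch ih =>
      intro X hX
      rcases List.mem_cons.mp hX with rfl | hX
      · cases hc with
        | refl => omega
        | step r hr hA hout _ _ _ => exact Finset.mem_image.mpr ⟨r, hr, hA⟩
      · exact ih X hX

lemma chain_of_long : ∀ (d : ℕ) {n : ℕ} {A : g.NT} {w : List T},
    Der g [Symbol.nonterminal A] w n → M g ^ d < w.length →
    ∃ l, l.length = d + 1 ∧ NChain g A w n l := by
  intro d
  induction d with
  | zero => exact fun h _ => ⟨_, by simp, NChain.nil h⟩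
  | succ d IH =>
      intro n A w h hlen
      obtain ⟨r, hr, hA, k, hout, rfl⟩ := h.single_nt_inv
      have hsplit := hout.split (c := M g ^ d) (Nat.one_le_pow _ _ one_le_M) (by
        calc M g ^ d * r.output.length ≤ M g ^ d * M g :=
              Nat.mul_le_mul_left _ (output_length_le_M hr)
          _ = M g ^ (d + 1) := (pow_succ (M g) d).symm
          _ < w.length := hlen)
      obtain ⟨s1, B, s2, w1, u, w2, n1, kB, n2, hso, rfl, rfl, hdB, hult, d1, d2⟩ := hsplit
      obtain ⟨l, hl, hch⟩ := IH hdB hult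
      refine ⟨A :: l, by simp [hl], ?_⟩
      have := NChain.cons (Ctx.single r hr hA hso d1 d2) (by omega) hch
      exact this.congr rfl (by omega)

lemma NChain.extract {A w n l} (h : NChain g A w n l) :
    ∀ l1 (B : g.NT) l2, l = l1 ++ B :: l2 →
    ∃ u y w' n1 n2, Ctx g A u B y n1 ∧ NChain g B w' n2 (B :: l2) ∧
      w = u ++ w' ++ y ∧ n = n1 + n2 ∧ (l1 ≠ [] → 0 < n1) := by
  induction h with
  | nil h =>
      rename_i A' w' n'
      intro l1 B l2 heq
      rcases l1 with _ | ⟨X, l1⟩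
      · simp only [List.nil_append, List.cons.injEq] at heq
        obtain ⟨rfl, rfl⟩ := heq
        exact ⟨[], [], w', 0, n', Ctx.refl A', NChain.nil h, by simp, by omega, by simp⟩
      · simp only [List.cons_append, List.cons.injEq] at heq
        exact absurd heq.2 (by simp)
  | cons hc h1 hch ih =>
      rename_i A' B' u' y' w' n1' n2' l'
      intro l1 B l2 heq
      rcases l1 with _ | ⟨X, l1⟩
      · simp only [List.nil_append, List.cons.injEq] at heq
        obtain ⟨rfl, rfl⟩ := heq
        exact ⟨[], [], _, 0, n1' + n2', Ctx.refl A', NChain.cons hc h1 hch, by simp,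
          by omega, by simp⟩
      · simp only [List.cons_append, List.cons.injEq] at heq
        obtain ⟨rfl, heq⟩ := heq
        obtain ⟨u2, y2, w2, m1, m2, hc2, hch2, hw2, hn2, _⟩ := ih l1 B l2 heq
        refine ⟨u' ++ u2, y2 ++ y', w2, n1' + m1, m2, hc.comp hc2, hch2, ?_, by omega,
          fun _ => by omega⟩
        rw [hw2]; simp [List.append_assoc]

lemma exists_dup {β : Type*} : ∀ {l : List β}, ¬ l.Nodup →
    ∃ (l1 : List β) (B : β) (l2 : List β), l = l1 ++ B :: l2 ∧ B ∈ l2 := by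
  intro l
  induction l with
  | nil => intro h; exact absurd List.nodup_nil h
  | cons a l ih =>
      intro h
      by_cases ha : a ∈ l
      · exact ⟨[], a, l, rfl, ha⟩
      · have : ¬ l.Nodup := fun hn => h (List.nodup_cons.mpr ⟨ha, hn⟩)
        obtain ⟨l1, B, l2, rfl, hB⟩ := ih this
        exact ⟨a :: l1, B, l2, rfl, hB⟩

lemma repl_comm {β : Type*} (x : List β) : ∀ i : ℕ,
    (List.replicate i x).flatten ++ x = x ++ (List.replicate i x).flatten := by
  intro i
  induction i with
  | zero => simp
  | succ i ih =>
      simp only [List.replicate_succ, List.flatten_cons, List.append_assoc, ih]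

open ContextFreeGrammar in
lemma pump_iter {C : g.NT} {v x w2 : List T}
    (hmid : g.Derives [Symbol.nonterminal C]
      (v.map Symbol.terminal ++ [Symbol.nonterminal C] ++ x.map Symbol.terminal))
    (hw : g.Derives [Symbol.nonterminal C] (w2.map Symbol.terminal)) (i : ℕ) :
    g.Derives [Symbol.nonterminal C]
      (((List.replicate i v).flatten ++ w2 ++ (List.replicate i x).flatten).map
        Symbol.terminal) := by
  induction i with
  | zero => simpa using hw
  | succ i ih =>
      refine hmid.trans ?_
      have := (ih.append_left (v.map Symbol.terminal)).append_right (x.map Symbol.terminal)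
      have heq : ((List.replicate (i+1) v).flatten ++ w2 ++
          (List.replicate (i+1) x).flatten) =
          v ++ ((List.replicate i v).flatten ++ w2 ++ (List.replicate i x).flatten) ++ x := by
        simp only [List.replicate_succ, List.flatten_cons, List.append_assoc]
        rw [← repl_comm x i]
      rw [heq]
      simp only [List.map_append, List.append_assoc] at this ⊢
      exact this

end CFPump

open CFPump in
/-- Theorem 7.6 (Pumping Lemma for Context-Free Languages): for every context-free
language `L` there is an integer `k` such that any word `z ∈ L` with `|z| > k` can be
written `z = u v w x y` with `v ≠ ε` or `x ≠ ε`, `|v w x| ≤ k`, and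
`u vⁱ w xⁱ y ∈ L` for all `i ≥ 0`. -/
theorem contextFree_pumping {α : Type} [Fintype α] (L : Language α)
    (hL : L.IsContextFree) :
    ∃ k : ℕ, ∀ z ∈ L, k < z.length →
      ∃ u v w x y : List α, z = u ++ v ++ w ++ x ++ y ∧
        (v ≠ [] ∨ x ≠ []) ∧ (v ++ w ++ x).length ≤ k ∧
        ∀ i : ℕ, u ++ (List.replicate i v).flatten ++ w ++
          (List.replicate i x).flatten ++ y ∈ L := by
  classical
  obtain ⟨g, rfl⟩ := hL
  set d := (g.rules.image ContextFreeRule.input).card with hd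
  refine ⟨M g ^ (d + 1), ?_⟩
  intro z hz hzlen
  rw [ContextFreeGrammar.mem_language_iff] at hz
  have hex : ∃ n, Der g [Symbol.nonterminal g.initial] z n := der_of_derives hz
  have hn : Der g [Symbol.nonterminal g.initial] z (Nat.find hex) := Nat.find_spec hex
  obtain ⟨u0, B, y0, w', n1, n2, hctx0, hdB, hnsum, hzeq, hlt', hle'⟩ :=
    descend (Nat.find hex) hn d hzlen
  obtain ⟨l, hllen, hch⟩ := chain_of_long d hdB hlt'
  have hnodup : ¬ l.Nodup := by
    intro hnd
    have hsub : l.toFinset ⊆ g.rules.image ContextFreeRule.input := fun X hX =>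
      hch.labels_mem X (List.mem_toFinset.mp hX)
    have hcard := Finset.card_le_card hsub
    rw [List.toFinset_card_of_nodup hnd] at hcard
    omega
  obtain ⟨l1, C, l2, hleq, hCl2⟩ := exists_dup hnodup
  obtain ⟨l2a, l2b, hl2⟩ := List.append_of_mem hCl2
  obtain ⟨u1, y1, w1, m1, m2, hc1, hch1, hw1, hm, -⟩ := hch.extract l1 C l2 hleq
  have heq2 : C :: l2 = (C :: l2a) ++ C :: l2b := by rw [hl2]; rfl
  obtain ⟨v, x, w2, m3, m4, hc2, hch2, hw2, hm2, hpos⟩ := hch1.extract (C :: l2a) C l2b heq2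
  have hm3 : 0 < m3 := hpos (by simp)
  have hder2 : Der g [Symbol.nonterminal C] w2 m4 := hch2.der
  by_cases hvx : v = [] ∧ x = []
  · exfalso
    obtain ⟨rfl, rfl⟩ := hvx
    have hsm : Der g [Symbol.nonterminal g.initial] z ((n1 + m1) + m4) := by
      have hfill := (hctx0.comp hc1).fill hder2
      refine hfill.congr rfl ?_ rfl
      rw [hzeq, hw1, hw2]
      simp [List.append_assoc]
    have hlt2 : (n1 + m1) + m4 < Nat.find hex := by omega
    exact absurd hsm (Nat.find_min hex hlt2)
  · refine ⟨u0 ++ u1, v, w2, x, y1 ++ y0, ?_, ?_, ?_, ?_⟩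
    · rw [hzeq, hw1, hw2]
      simp [List.append_assoc]
    · tauto
    · have h1 : (v ++ w2 ++ x).length = w1.length := by rw [hw2]
      have h2 : w1.length ≤ w'.length := by
        rw [hw1]; simp only [List.length_append]; omega
      omega
    · intro i
      rw [ContextFreeGrammar.mem_language_iff]
      have hOuter := (hctx0.comp hc1).derives
      have hMid := hc2.derives
      have hIter := pump_iter hMid hder2.derives i
      refine hOuter.trans ?_
      have h3 := (hIter.append_left ((u0 ++ u1).map Symbol.terminal)).append_right
        ((y1 ++ y0).map Symbol.terminal)
      simp only [List.map_append, List.append_assoc] at h3 ⊢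
      exact h3
end

section
/- Let Ω be a type. For d ∈ Ω define partial functions on List Ω (modeled as functions List Ω → Option (List Ω)) by P_d(u) = some (u ++ [d]) and Q_d(u) = some v if u = v ++ [d] and none otherwise. Let A₁, …, A_n (n ≥ 1) be a nonempty sequence, each A_i of the form P_d or Q_d for some d ∈ Ω, and suppose the composite partial function applying A₁ first, then A₂, …, then A_n equals the identity (i.e. for every u ∈ List Ω the composite sends u to some u). Then one of the following holds: (i) A₁ = P_d and A_n = Q_d for some d ∈ Ω, and either n = 2 or n > 2 and the composite of A₂, …, A_{n−1} is the identity; or (ii) there is an index i with 1 ≤ i < n such that the composite of A₁, …, A_i and the composite of A_{i+1}, …, A_n are both the identity. -/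
/-- The partial function `P_d` pushing `d` onto a stack: `u P_w = u ++ [d]`. -/
def push {Ω : Type*} (d : Ω) : List Ω → Option (List Ω) :=
  fun u => some (u ++ [d])

/-- The partial function `Q_d` popping `d` off a stack: `u Q_d = v` if `u = v ++ [d]`,
undefined otherwise. -/
def pop {Ω : Type*} [DecidableEq Ω] (d : Ω) : List Ω → Option (List Ω) :=
  fun u => if u.getLast? = some d then some u.dropLast else none

/-- The composite of a sequence of partial functions, applying the head of the list
first (Kleisli composition); the composite of the empty sequence is the identity. -/
def compAll {Ω : Type*} : List (List Ω → Option (List Ω)) → List Ω → Option (List Ω)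
  | [], u => some u
  | A :: rest, u => (A u).bind (compAll rest)

/-!
Pushes and pops, hence all words in them, commute with placing a fixed stack underneath, so
a word is the identity as soon as it sends the empty stack to itself. Follow the stack
starting from the empty one. If it is empty again after a proper prefix, the word splits there
into two identities. Otherwise the first letter pushes some `d` that stays at the bottom until
the last letter, which must therefore pop `d`; the word in between never reaches that `d`, so
it sends the empty stack to itself and is the identity.
-/

section

variable {Ω : Type*}

theorem compAll_append (l₁ l₂ : List (List Ω → Option (List Ω))) (u : List Ω) :
    compAll (l₁ ++ l₂) u = (compAll l₁ u).bind (compAll l₂) := by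
  induction l₁ generalizing u with
  | nil => rfl
  | cons A rest ih =>
    simp only [List.cons_append, compAll]
    cases A u <;> simp [ih]

@[simp]
theorem compAll_singleton (A : List Ω → Option (List Ω)) (u : List Ω) :
    compAll [A] u = A u := by
  cases h : A u <;> simp [compAll, h]

end

section

variable {Ω : Type*} [DecidableEq Ω]

def IsStackOp (A : List Ω → Option (List Ω)) : Prop :=
  (∃ d, A = push d) ∨ (∃ d, A = pop d)

namespace IsStackOp

variable {A : List Ω → Option (List Ω)}

theorem append_left (hA : IsStackOp A) {u v : List Ω} (h : A u = some v) (p : List Ω) :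
    A (p ++ u) = some (p ++ v) := by
  rcases hA with ⟨d, rfl⟩ | ⟨d, rfl⟩
  · simp_all [push]
  · unfold pop at h ⊢
    split_ifs at h with hu
    cases h
    have hne : u ≠ [] := by rintro rfl; simp at hu
    rw [List.getLast?_append_of_ne_nil _ hne, if_pos hu, List.dropLast_append_of_ne_nil hne]

theorem of_apply_cons (hA : IsStackOp A) {x y : Ω} {u w : List Ω}
    (h : A (x :: u) = some (y :: w)) : y = x ∧ A u = some w := by
  rcases hA with ⟨d, rfl⟩ | ⟨d, rfl⟩
  · simp_all [push]
  · unfold pop at h ⊢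
    split_ifs at h with hu
    cases u with
    | nil => simp at h
    | cons z u => simp_all

theorem eq_push_of_apply_nil (hA : IsStackOp A) {s : List Ω} (h : A [] = some s) :
    ∃ d, A = push d ∧ s = [d] := by
  rcases hA with ⟨d, rfl⟩ | ⟨d, rfl⟩
  · exact ⟨d, rfl, by simpa [push] using h.symm⟩
  · simp [pop] at h

theorem eq_pop_of_apply_eq_nil (hA : IsStackOp A) {x : Ω} {u : List Ω}
    (h : A (x :: u) = some []) : A = pop x ∧ u = [] := by
  rcases hA with ⟨d, rfl⟩ | ⟨d, rfl⟩
  · simp [push] at h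
  · unfold pop at h
    split_ifs at h with hu
    cases u with
    | nil => simp_all
    | cons z u => simp at h

end IsStackOp

variable {w : List (List Ω → Option (List Ω))}

theorem compAll_append_left (hw : ∀ A ∈ w, IsStackOp A) {u v : List Ω}
    (h : compAll w u = some v) (p : List Ω) : compAll w (p ++ u) = some (p ++ v) := by
  induction w generalizing u with
  | nil => simp_all [compAll]
  | cons A w ih =>
    simp only [compAll, List.mem_cons, forall_eq_or_imp] at h hw ⊢
    obtain ⟨s, hs, hsv⟩ := Option.bind_eq_some_iff.mp h
    rw [hw.1.append_left hs p, Option.bind_some, ih hw.2 hsv]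

theorem compAll_eq_id_of_nil (hw : ∀ A ∈ w, IsStackOp A) (h : compAll w [] = some []) :
    compAll w = fun u => some u := by
  funext u
  simpa using compAll_append_left hw h u

/-- A word that never empties the stack `x :: u` never looks at `x`. -/
theorem compAll_of_compAll_cons (hw : ∀ A ∈ w, IsStackOp A) {x : Ω} {u v : List Ω}
    (h : compAll w (x :: u) = some v)
    (hne : ∀ j ≤ w.length, compAll (w.take j) (x :: u) ≠ some []) :
    ∃ v', v = x :: v' ∧ compAll w u = some v' := by
  induction w generalizing u with
  | nil => simp_all [compAll]
  | cons A w ih =>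
    simp only [List.mem_cons, forall_eq_or_imp] at hw
    simp only [compAll] at h
    obtain ⟨s, hs, hsv⟩ := Option.bind_eq_some_iff.mp h
    obtain ⟨y, s, rfl⟩ := List.exists_cons_of_ne_nil (l := s) fun hs0 =>
      hne 1 (by simp) (by simp [hs, hs0])
    obtain ⟨rfl, hAu⟩ := hw.1.of_apply_cons hs
    obtain ⟨v', rfl, hv'⟩ := ih hw.2 hsv fun j hj => by
      simpa [compAll, hs] using hne (j + 1) (by simpa using hj)
    exact ⟨v', rfl, by simp [compAll, hAu, hv']⟩

variable {l : List (List Ω → Option (List Ω))}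

theorem exists_eq_push_cons_pop (hl : ∀ A ∈ l, IsStackOp A) (hne : l ≠ [])
    (h : compAll l [] = some [])
    (hret : ∀ i, 1 ≤ i → i < l.length → compAll (l.take i) [] ≠ some []) :
    ∃ d m, l = push d :: (m ++ [pop d]) ∧ compAll m [] = some [] := by
  obtain ⟨A, r, rfl⟩ := List.exists_cons_of_ne_nil hne
  simp only [List.mem_cons, forall_eq_or_imp] at hl
  simp only [compAll] at h
  obtain ⟨s, hs, hr⟩ := Option.bind_eq_some_iff.mp h
  obtain ⟨d, rfl, rfl⟩ := hl.1.eq_push_of_apply_nil hs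
  obtain ⟨m, B, rfl⟩ : ∃ m B, r = m ++ [B] := by
    obtain rfl | ⟨m, B, rfl⟩ := r.eq_nil_or_concat
    · simp [compAll] at hr
    · exact ⟨m, B, List.concat_eq_append⟩
  rw [compAll_append] at hr
  obtain ⟨v, hv, hBv⟩ := Option.bind_eq_some_iff.mp hr
  have hm : ∀ A ∈ m, IsStackOp A := fun A hA => hl.2 A (by simp [hA])
  obtain ⟨v', rfl, hmv'⟩ := compAll_of_compAll_cons hm hv fun j hj => by
    simpa [compAll, push, List.take_append_of_le_length hj] using
      hret (j + 1) (by omega) (by simp; omega)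
  obtain ⟨rfl, rfl⟩ := (hl.2 B (by simp)).eq_pop_of_apply_eq_nil (by simpa using hBv)
  exact ⟨d, m, rfl, hmv'⟩

end

/-- Lemma 7.7: if a nonempty word `A₁ … A_n` in the generators `{P_d, Q_d | d ∈ Ω}` of
`M_cf` represents the identity, then either (i) `A₁ = P_d`, `A_n = Q_d` for some `d`,
and `n = 2` or `n > 2` and `A₂ … A_{n-1}` represents the identity; or (ii) for some `i`
with `1 ≤ i < n`, both `A₁ … A_i` and `A_{i+1} … A_n` represent the identity. -/
theorem pushPop_word_repr_one {Ω : Type*} [DecidableEq Ω]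
    (l : List (List Ω → Option (List Ω))) (hne : l ≠ [])
    (hgen : ∀ A ∈ l, (∃ d : Ω, A = push d) ∨ (∃ d : Ω, A = pop d))
    (hid : compAll l = fun u => some u) :
    (∃ d : Ω, l.head hne = push d ∧ l.getLast hne = pop d ∧
      (l.length = 2 ∨ (2 < l.length ∧ compAll l.tail.dropLast = fun u => some u))) ∨
    (∃ i : ℕ, 1 ≤ i ∧ i < l.length ∧
      compAll (l.take i) = (fun u => some u) ∧
      compAll (l.drop i) = (fun u => some u)) := by
  by_cases hret : ∃ i, 1 ≤ i ∧ i < l.length ∧ compAll (l.take i) [] = some []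
  · obtain ⟨i, hi1, hil, hi⟩ := hret
    have htake : compAll (l.take i) = fun u => some u :=
      compAll_eq_id_of_nil (fun A hA => hgen A (List.mem_of_mem_take hA)) hi
    refine Or.inr ⟨i, hi1, hil, htake, funext fun u => ?_⟩
    calc compAll (l.drop i) u = compAll (l.take i ++ l.drop i) u := by
          rw [compAll_append, htake, Option.bind_some]
      _ = some u := by rw [List.take_append_drop, hid]
  · push Not at hret
    obtain ⟨d, m, rfl, hm⟩ := exists_eq_push_cons_pop hgen hne (by simp [hid]) hret
    have hmid : compAll m = fun u => some u :=
      compAll_eq_id_of_nil (fun A hA => hgen A (by simp [hA])) hm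
    refine Or.inl ⟨d, rfl, by simp, ?_⟩
    obtain rfl | hm0 := eq_or_ne m []
    · simp
    · exact Or.inr ⟨by simpa using List.length_pos_iff.mpr hm0, by simpa using hmid⟩
end
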